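/- arXiv:2511.22370 — 2 statements merged into one kernel-verified Lean document; each statement's English description precedes it below -/
import Mathlib

section
/- Consider an altruistic hedonic game under avg-AL utilities (with fixed weight w ≥ n^4) on n players whose network of friends contains a pinched (d,k')-dome gadget on a player set P, where d ≥ 1, k' > 2d+3, and n ≥ k'·(d+1), and such that no player of P other than the top player p* has a friend outside P. Let Γ be a coalition structure containing P as a coalition. If a coalition C blocks Γ, then C contains no player of the base clique of the gadget (in particular, no fringe player). -/
open Finset
open scoped Classical

section AHGDefs

variable {N : Type*} [Fintype N] [DecidableEq N]

/-- The set of friends of player `i` inside coalition `C`. -/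
noncomputable def friendsIn (G : SimpleGraph N) (C : Finset N) (i : N) : Finset N :=
  C.filter fun j => G.Adj i j

/-- The friend-oriented valuation of coalition `C` by player `i`:
`val_i(C) = n·|F_i ∩ C| − |E_i ∩ C|`. -/
noncomputable def fval (G : SimpleGraph N) (C : Finset N) (i : N) : ℤ :=
  (Fintype.card N : ℤ) * ((friendsIn G C i).card : ℤ)
    - ((C.filter fun j => ¬ G.Adj i j ∧ j ≠ i).card : ℤ)

/-- Average-based equal-treatment utility. -/
noncomputable def utilAvgEQ (G : SimpleGraph N) (C : Finset N) (i : N) : ℚ :=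
  (∑ c ∈ insert i (friendsIn G C i), (fval G C c : ℚ)) /
    ((insert i (friendsIn G C i)).card : ℚ)

/-- Average-based altruistic-treatment utility with weight `w`. -/
noncomputable def utilAvgAL (G : SimpleGraph N) (w : ℚ) (C : Finset N) (i : N) : ℚ :=
  (fval G C i : ℚ) +
    w * (if (friendsIn G C i).Nonempty then
          (∑ c ∈ friendsIn G C i, (fval G C c : ℚ)) / ((friendsIn G C i).card : ℚ)
         else 0)

/-- Min-based equal-treatment utility. -/
noncomputable def utilMinEQ (G : SimpleGraph N) (C : Finset N) (i : N) : ℤ :=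
  (insert i (friendsIn G C i)).inf' (insert_nonempty _ _) (fval G C)

/-- Min-based altruistic-treatment utility with weight `w`. -/
noncomputable def utilMinAL (G : SimpleGraph N) (w : ℤ) (C : Finset N) (i : N) : ℤ :=
  fval G C i +
    w * (if h : (friendsIn G C i).Nonempty then (friendsIn G C i).inf' h (fval G C) else 0)

/-- A coalition structure (partition of the players), given as the map sending
each player to its coalition. -/
structure CoalitionStructure (N : Type*) [Fintype N] [DecidableEq N] where
  part : N → Finset N
  mem_part : ∀ i, i ∈ part i
  part_eq : ∀ i j, j ∈ part i → part j = part i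

/-- A (nonempty) coalition `C` blocks the coalition structure `Γ`. -/
def Blocks {α : Type*} [LT α] (util : Finset N → N → α) (Γ : CoalitionStructure N)
    (C : Finset N) : Prop :=
  C.Nonempty ∧ ∀ i ∈ C, util (Γ.part i) i < util C i

/-- Core stability: no nonempty coalition blocks `Γ`. -/
def CoreStable {α : Type*} [LT α] (util : Finset N → N → α)
    (Γ : CoalitionStructure N) : Prop :=
  ¬ ∃ C : Finset N, Blocks util Γ C

/-- The base clique of a pinched `(d,k')`-dome gadget on `P` with top player `top`
and (unique) mid player `mid`. -/
noncomputable def pdomeBase (P : Finset N) (top mid : N) : Finset N :=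
  P \ {top, mid}

/-- `P` carries a pinched `(d,k')`-dome gadget of the graph `G`, with top player `top`,
the unique mid player `mid` (obtained by identifying the `d` mid players) and fringe
players `fringe i`. -/
structure IsPinchedDomeGadget (G : SimpleGraph N) (d k' : ℕ) (P : Finset N) (top mid : N)
    (fringe : Fin d → N) : Prop where
  card_eq : P.card = k' - d + 1
  top_mem : top ∈ P
  mid_mem : mid ∈ P
  mid_ne_top : mid ≠ top
  fringe_mem : ∀ i, fringe i ∈ pdomeBase P top mid
  fringe_inj : Function.Injective fringe
  adj_iff : ∀ x ∈ P, ∀ y ∈ P, (G.Adj x y ↔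
    ((x = top ∧ y = mid) ∨ (y = top ∧ x = mid) ∨
     (x ∈ pdomeBase P top mid ∧ y ∈ pdomeBase P top mid ∧ x ≠ y) ∨
     (x = mid ∧ ∃ i, y = fringe i) ∨ (y = mid ∧ ∃ i, x = fringe i)))

/-- `P` carries a pinched `(d,k')`-dome gadget with top player `top`. -/
def HasPinchedDomeGadget (G : SimpleGraph N) (d k' : ℕ) (P : Finset N) (top : N) : Prop :=
  ∃ (mid : N) (fringe : Fin d → N), IsPinchedDomeGadget G d k' P top mid fringe
end AHGDefs


set_option maxHeartbeats 1600000

section AuxLemmas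

lemma util_le_helper (a c x y p q v w : ℚ) (hp : 0 < p) (hq : 0 < q) (h0 : 0 ≤ v)
    (hw : v ≤ w) (h1 : x * q ≤ y * p)
    (h2 : (a - c) * (p * q) + v * (x * q - y * p) ≤ 0) :
    a + w * (x / p) ≤ c + w * (y / q) := by
  have hpq : 0 < p * q := mul_pos hp hq
  have hxy : x / p ≤ y / q := (div_le_div_iff₀ hp hq).2 h1
  have h3 : w * (x / p - y / q) ≤ v * (x / p - y / q) :=
    mul_le_mul_of_nonpos_right hw (by linarith)
  have ep : x / p * p = x := div_mul_cancel₀ x hp.ne'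
  have eq' : y / q * q = y := div_mul_cancel₀ y hq.ne'
  have key2 : ((a - c) + v * (x / p - y / q)) * (p * q) ≤ 0 := by
    have expand : ((a - c) + v * (x / p - y / q)) * (p * q)
        = (a - c) * (p * q) + v * (x * q - y * p) := by
      linear_combination (v * q) * ep - (v * p) * eq'
    rw [expand]; exact h2
  have key : (a - c) + v * (x / p - y / q) ≤ 0 := by
    by_contra hcon
    push_neg at hcon
    nlinarith [mul_pos hcon hpq]
  nlinarith [h3, key]

section
variable (n b d s f t u : ℤ)

lemma nf_case (hd : 1 ≤ d) (hb : d + 3 ≤ b) (hn : (b + d + 1) * (d + 1) ≤ n)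
    (ht0 : 0 ≤ t) (ht1 : t ≤ 1) (hu0 : 0 ≤ u) (hu1 : u ≤ 1)
    (hs2 : 2 ≤ s) (hsb : s ≤ b) (hf0 : 0 ≤ f) (hfd : f ≤ d) (hfs : f ≤ s - 1)
    (hex : ¬(s = b ∧ u = 1 ∧ f = d)) :
    (f * (n * (s - 1 + u) - t) + (s - 1 - f) * (n * (s - 1) - t - u)) * (b - 1)
      ≤ (d * (n * b - 1) + (b - 1 - d) * (n * (b - 1) - 2)) * (s - 1) ∧
    ((n * (s - 1) - t - u) - (n * (b - 1) - 2)) * ((s - 1) * (b - 1))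
      + n ^ 4 * ((f * (n * (s - 1 + u) - t) + (s - 1 - f) * (n * (s - 1) - t - u)) * (b - 1)
          - (d * (n * b - 1) + (b - 1 - d) * (n * (b - 1) - 2)) * (s - 1)) ≤ 0 := by
  have hn2b : 2 * b + 4 ≤ n := by nlinarith
  have hn1 : 1 ≤ n := by linarith
  have hnn4 : n ≤ n ^ 4 := by nlinarith [mul_nonneg (mul_nonneg (by linarith : (0:ℤ) ≤ n)
    (by linarith : (0:ℤ) ≤ n - 1)) (by nlinarith [sq_nonneg n] : (0:ℤ) ≤ n^2 + n + 1)]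
  have hn40 : 0 ≤ n ^ 4 := by positivity
  have hs1 : (0:ℤ) ≤ s - 1 := by linarith
  have hb1 : (0:ℤ) ≤ b - 1 := by linarith
  rcases lt_or_eq_of_le hsb with hlt | heq
  · -- s ≤ b - 1
    have hbs : (1:ℤ) ≤ b - s := by linarith
    have hEneg : (f * (n * (s - 1 + u) - t) + (s - 1 - f) * (n * (s - 1) - t - u)) * (b - 1)
        - (d * (n * b - 1) + (b - 1 - d) * (n * (b - 1) - 2)) * (s - 1) ≤ 0 := by
      nlinarith [mul_nonneg (mul_nonneg (sub_nonneg.2 hu1) hf0) hb1,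
        mul_nonneg (mul_nonneg (sub_nonneg.2 hfd) hs1) (by linarith : (0:ℤ) ≤ n + 1),
        mul_nonneg (mul_nonneg (sub_nonneg.2 hfs) (by linarith : (0:ℤ) ≤ b - s))
          (by linarith : (0:ℤ) ≤ n + 1),
        mul_nonneg (mul_nonneg (mul_nonneg hs1 (by linarith : (0:ℤ) ≤ b - s))
          (by linarith : (0:ℤ) ≤ n)) (by linarith : (0:ℤ) ≤ b - 4),
        mul_nonneg (mul_nonneg hs1 (by linarith : (0:ℤ) ≤ b - s - 1))
          (by linarith : (0:ℤ) ≤ 2 * n - 1),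
        mul_nonneg hs1 (by linarith : (0:ℤ) ≤ 2 * n - 2 * b + 1),
        mul_nonneg (mul_nonneg hs1 hb1) (by linarith : (0:ℤ) ≤ t + u),
        mul_nonneg (mul_nonneg (sub_nonneg.2 hu1) hf0)
          (mul_nonneg hb1 (by linarith : (0:ℤ) ≤ n + 1))]
    have hval : (n * (s - 1) - t - u) - (n * (b - 1) - 2) ≤ 0 := by nlinarith
    refine ⟨by linarith, ?_⟩
    nlinarith [mul_nonneg (mul_nonneg hs1 hb1) (neg_nonneg.2 hval),
      mul_nonneg hn40 (neg_nonneg.2 hEneg)]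
  · -- s = b
    subst heq
    have hcase : u = 0 ∨ (u = 1 ∧ f ≤ d - 1) := by
      rcases eq_or_lt_of_le hu1 with h | h
      · by_cases hfd' : f = d
        · exact absurd ⟨rfl, h, hfd'⟩ hex
        · right; exact ⟨h, by omega⟩
      · left; omega
    have hEneg : (f * (n * (s - 1 + u) - t) + (s - 1 - f) * (n * (s - 1) - t - u)) * (s - 1)
        - (d * (n * s - 1) + (s - 1 - d) * (n * (s - 1) - 2)) * (s - 1)
        ≤ (-7) * (s - 1) := by
      rcases hcase with h | ⟨h1, h2⟩
      · subst h
        nlinarith [mul_nonneg (mul_nonneg hs1 (by linarith : (0:ℤ) ≤ d - 1))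
            (by linarith : (0:ℤ) ≤ n + 1),
          mul_nonneg (mul_nonneg hs1 ht0) hs1,
          mul_nonneg hs1 (by linarith : (0:ℤ) ≤ n - 2 * s - 4)]
      · subst h1
        nlinarith [mul_nonneg (mul_nonneg hs1 (by linarith : (0:ℤ) ≤ d - f - 1))
            (by linarith : (0:ℤ) ≤ n + 1),
          mul_nonneg (mul_nonneg hs1 ht0) hs1,
          mul_nonneg hs1 (by linarith : (0:ℤ) ≤ n - s - 5)]
    have hE0 : (f * (n * (s - 1 + u) - t) + (s - 1 - f) * (n * (s - 1) - t - u)) * (s - 1)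
        - (d * (n * s - 1) + (s - 1 - d) * (n * (s - 1) - 2)) * (s - 1) ≤ 0 := by
      nlinarith
    refine ⟨by linarith, ?_⟩
    have hb4 : s - 1 ≤ n ^ 4 := by linarith
    have g := mul_le_mul_of_nonneg_left hEneg hn40
    nlinarith [mul_nonneg (mul_nonneg hs1 hs1) (by linarith : (0:ℤ) ≤ t + u),
      mul_nonneg hs1 (by linarith : (0:ℤ) ≤ 7 * n ^ 4 - 2 * (s - 1))]
end

section
variable (n b d s t u : ℤ)

-- all-fringe case: s = f, witness fringe, friends nonempty (1 ≤ s - 1 + u)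
lemma fr_all_case (hd : 1 ≤ d) (hb : d + 3 ≤ b) (hn : (b + d + 1) * (d + 1) ≤ n)
    (ht0 : 0 ≤ t) (ht1 : t ≤ 1) (hu0 : 0 ≤ u) (hu1 : u ≤ 1)
    (hs1 : 1 ≤ s) (hsd : s ≤ d) (hp : 1 ≤ s - 1 + u) :
    ((s - 1) * (n * (s - 1 + u) - t) + u * (n * (t + s))) * b
      ≤ ((d - 1) * (n * b - 1) + (b - d) * (n * (b - 1) - 2) + (n * (d + 1) - (b - d)))
          * (s - 1 + u) ∧
    ((n * (s - 1 + u) - t) - (n * b - 1)) * ((s - 1 + u) * b)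
      + n ^ 4 * (((s - 1) * (n * (s - 1 + u) - t) + u * (n * (t + s))) * b
          - ((d - 1) * (n * b - 1) + (b - d) * (n * (b - 1) - 2) + (n * (d + 1) - (b - d)))
              * (s - 1 + u)) ≤ 0 := by
  have hn2b : 2 * b + 4 ≤ n := by nlinarith
  have hn1 : 1 ≤ n := by linarith
  have hn40 : 0 ≤ n ^ 4 := by positivity
  have hb0 : (0:ℤ) ≤ b := by linarith
  have hp0 : (0:ℤ) ≤ s - 1 + u := by linarith
  have hs0 : (0:ℤ) ≤ s - 1 := by linarith
  have hnd : (0:ℤ) ≤ n * (2 * d + 1) - 3 * b := by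
    nlinarith [mul_nonneg (by linarith : (0:ℤ) ≤ n) (by linarith : (0:ℤ) ≤ d - 1)]
  have h1 : ((s - 1) * (n * (s - 1 + u) - t) + u * (n * (t + s))) * b
      ≤ ((d - 1) * (n * b - 1) + (b - d) * (n * (b - 1) - 2) + (n * (d + 1) - (b - d)))
          * (s - 1 + u) := by
    linarith [mul_nonneg (mul_nonneg (mul_nonneg (by linarith : (0:ℤ) ≤ n) hp0) hb0)
        (by linarith : (0:ℤ) ≤ b - 3 - s),
      mul_nonneg (mul_nonneg (mul_nonneg hb0 (by linarith : (0:ℤ) ≤ n)) hs0)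
        (by linarith : (0:ℤ) ≤ 2 - u),
      mul_nonneg (mul_nonneg (mul_nonneg hu0 hb0) (by linarith : (0:ℤ) ≤ n))
        (by linarith : (0:ℤ) ≤ 1 - t),
      mul_nonneg hp0 hnd,
      mul_nonneg hp0 (by linarith : (0:ℤ) ≤ 2 * d + 1),
      mul_nonneg (mul_nonneg hb0 hs0) ht0]
  refine ⟨h1, ?_⟩
  have hval : (n * (s - 1 + u) - t) - (n * b - 1) ≤ 0 := by nlinarith
  nlinarith [mul_nonneg (mul_nonneg hp0 hb0) (neg_nonneg.2 hval),
    mul_nonneg hn40 (sub_nonneg.2 h1)]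

-- special case: t = 0, u = 1, s = b, f = d
lemma fr_special_case (hd : 1 ≤ d) (hb : d + 3 ≤ b) (hn : (b + d + 1) * (d + 1) ≤ n) :
    ((d - 1) * (n * b) + (b - d) * (n * (b - 1) - 1) + (n * d - (b - d))) * b
      ≤ ((d - 1) * (n * b - 1) + (b - d) * (n * (b - 1) - 2) + (n * (d + 1) - (b - d))) * b ∧
    (n * b - (n * b - 1)) * (b * b)
      + n ^ 4 * (((d - 1) * (n * b) + (b - d) * (n * (b - 1) - 1) + (n * d - (b - d))) * b
          - ((d - 1) * (n * b - 1) + (b - d) * (n * (b - 1) - 2) + (n * (d + 1) - (b - d)))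
              * b) ≤ 0 := by
  have hn2b : 2 * b + 4 ≤ n := by nlinarith
  have hn1 : 1 ≤ n := by linarith
  have hnn4 : n ≤ n ^ 4 := by nlinarith [mul_nonneg (mul_nonneg (by linarith : (0:ℤ) ≤ n)
    (by linarith : (0:ℤ) ≤ n - 1)) (by nlinarith [sq_nonneg n] : (0:ℤ) ≤ n^2 + n + 1)]
  have hn40 : 0 ≤ n ^ 4 := by positivity
  have hb0 : (0:ℤ) ≤ b := by linarith
  constructor
  · nlinarith [mul_nonneg hb0 (by linarith : (0:ℤ) ≤ n - b + 1)]
  · nlinarith [mul_nonneg hb0 (mul_nonneg hn40 (by linarith : (0:ℤ) ≤ n - b)),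
      mul_nonneg hb0 (by linarith : (0:ℤ) ≤ n ^ 4 - n),
      mul_nonneg hb0 (by linarith : (0:ℤ) ≤ n - b)]
end
section Comp

variable {N : Type*} [Fintype N] [DecidableEq N]
variable (G : SimpleGraph N) (P B Fr A : Finset N) (top mid : N)

lemma friends_nf
    (hadj : ∀ y ∈ B, ∀ z ∈ P, (G.Adj y z ↔ (z ∈ B ∧ z ≠ y) ∨ (z = mid ∧ y ∈ Fr)))
    (hAP : A ⊆ P) {y : N} (hyB : y ∈ B) (hyFr : y ∉ Fr) :
    friendsIn G A y = (A ∩ B).erase y := by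
  ext z
  simp only [friendsIn, mem_filter, mem_erase, mem_inter]
  constructor
  · rintro ⟨hzA, hzadj⟩
    rcases (hadj y hyB z (hAP hzA)).1 hzadj with ⟨hzB, hne⟩ | ⟨rfl, hyFr'⟩
    · exact ⟨hne, hzA, hzB⟩
    · exact absurd hyFr' hyFr
  · rintro ⟨hne, hzA, hzB⟩
    exact ⟨hzA, (hadj y hyB z (hAP hzA)).2 (Or.inl ⟨hzB, hne⟩)⟩

lemma friends_fr
    (hFrB : Fr ⊆ B)
    (hadj : ∀ y ∈ B, ∀ z ∈ P, (G.Adj y z ↔ (z ∈ B ∧ z ≠ y) ∨ (z = mid ∧ y ∈ Fr)))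
    (hAP : A ⊆ P) {y : N} (hyFr : y ∈ Fr) :
    friendsIn G A y = (A ∩ B).erase y ∪ A ∩ {mid} := by
  ext z
  simp only [friendsIn, mem_filter, mem_erase, mem_inter, mem_union, mem_singleton]
  constructor
  · rintro ⟨hzA, hzadj⟩
    rcases (hadj y (hFrB hyFr) z (hAP hzA)).1 hzadj with ⟨hzB, hne⟩ | ⟨rfl, _⟩
    · exact Or.inl ⟨hne, hzA, hzB⟩
    · exact Or.inr ⟨hzA, rfl⟩
  · rintro (⟨hne, hzA, hzB⟩ | ⟨hzA, hzm⟩)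
    · exact ⟨hzA, (hadj y (hFrB hyFr) z (hAP hzA)).2 (Or.inl ⟨hzB, hne⟩)⟩
    · exact ⟨hzA, (hadj y (hFrB hyFr) z (hAP hzA)).2 (Or.inr ⟨hzm, hyFr⟩)⟩

lemma friends_mid
    (hadjM : ∀ z ∈ P, (G.Adj mid z ↔ z = top ∨ z ∈ Fr)) (hAP : A ⊆ P) :
    friendsIn G A mid = A ∩ {top} ∪ A ∩ Fr := by
  ext z
  simp only [friendsIn, mem_filter, mem_inter, mem_union, mem_singleton]
  constructor
  · rintro ⟨hzA, hzadj⟩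
    rcases (hadjM z (hAP hzA)).1 hzadj with h | h
    · exact Or.inl ⟨hzA, h⟩
    · exact Or.inr ⟨hzA, h⟩
  · rintro (⟨hzA, h⟩ | ⟨hzA, h⟩)
    · exact ⟨hzA, (hadjM z (hAP hzA)).2 (Or.inl h)⟩
    · exact ⟨hzA, (hadjM z (hAP hzA)).2 (Or.inr h)⟩

lemma enemies_nf
    (hB : B = P \ {top, mid}) (htopP : top ∈ P) (hmidP : mid ∈ P) (hmt : mid ≠ top)
    (hadj : ∀ y ∈ B, ∀ z ∈ P, (G.Adj y z ↔ (z ∈ B ∧ z ≠ y) ∨ (z = mid ∧ y ∈ Fr)))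
    (hAP : A ⊆ P) {y : N} (hyB : y ∈ B) (hyFr : y ∉ Fr) :
    A.filter (fun z => ¬ G.Adj y z ∧ z ≠ y) = A ∩ {top} ∪ A ∩ {mid} := by
  have htopB : top ∉ B := by simp [hB]
  have hmidB : mid ∉ B := by simp [hB]
  ext z
  simp only [mem_filter, mem_inter, mem_union, mem_singleton]
  constructor
  · rintro ⟨hzA, hna, hne⟩
    have hzP := hAP hzA
    have : z ∈ B ∨ z = top ∨ z = mid := by
      by_cases h : z ∈ B
      · exact Or.inl h
      · right
        have : z ∈ ({top, mid} : Finset N) := by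
          by_contra hc
          exact h (hB ▸ mem_sdiff.2 ⟨hzP, hc⟩)
        simpa using this
    rcases this with hzB | h | h
    · exact absurd ((hadj y hyB z hzP).2 (Or.inl ⟨hzB, hne⟩)) hna
    · exact Or.inl ⟨hzA, h⟩
    · exact Or.inr ⟨hzA, h⟩
  · rintro (⟨hzA, rfl⟩ | ⟨hzA, rfl⟩)
    · refine ⟨hzA, ?_, fun h => htopB (h ▸ hyB)⟩
      intro hc
      rcases (hadj y hyB z (hAP hzA)).1 hc with ⟨h1, _⟩ | ⟨h1, _⟩
      · exact htopB h1
      · exact hmt h1.symm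
    · refine ⟨hzA, ?_, fun h => hmidB (h ▸ hyB)⟩
      intro hc
      rcases (hadj y hyB z (hAP hzA)).1 hc with ⟨h1, _⟩ | ⟨_, h2⟩
      · exact hmidB h1
      · exact hyFr h2

lemma enemies_fr
    (hB : B = P \ {top, mid}) (hFrB : Fr ⊆ B) (htopP : top ∈ P) (hmt : mid ≠ top)
    (hadj : ∀ y ∈ B, ∀ z ∈ P, (G.Adj y z ↔ (z ∈ B ∧ z ≠ y) ∨ (z = mid ∧ y ∈ Fr)))
    (hAP : A ⊆ P) {y : N} (hyFr : y ∈ Fr) :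
    A.filter (fun z => ¬ G.Adj y z ∧ z ≠ y) = A ∩ {top} := by
  have htopB : top ∉ B := by simp [hB]
  have hyB := hFrB hyFr
  ext z
  simp only [mem_filter, mem_inter, mem_singleton]
  constructor
  · rintro ⟨hzA, hna, hne⟩
    have hzP := hAP hzA
    have : z ∈ B ∨ z = top ∨ z = mid := by
      by_cases h : z ∈ B
      · exact Or.inl h
      · right
        have : z ∈ ({top, mid} : Finset N) := by
          by_contra hc
          exact h (hB ▸ mem_sdiff.2 ⟨hzP, hc⟩)
        simpa using this
    rcases this with hzB | h | h
    · exact absurd ((hadj y hyB z hzP).2 (Or.inl ⟨hzB, hne⟩)) hna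
    · exact ⟨hzA, h⟩
    · exact absurd ((hadj y hyB z hzP).2 (Or.inr ⟨h, hyFr⟩)) hna
  · rintro ⟨hzA, rfl⟩
    refine ⟨hzA, ?_, fun h => htopB (h ▸ hyB)⟩
    intro hc
    rcases (hadj y hyB z (hAP hzA)).1 hc with ⟨h1, _⟩ | ⟨h1, _⟩
    · exact htopB h1
    · exact hmt h1.symm

lemma enemies_mid
    (hB : B = P \ {top, mid}) (hFrB : Fr ⊆ B) (htopP : top ∈ P)
    (hadjM : ∀ z ∈ P, (G.Adj mid z ↔ z = top ∨ z ∈ Fr)) (hAP : A ⊆ P) :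
    A.filter (fun z => ¬ G.Adj mid z ∧ z ≠ mid) = (A ∩ B) \ Fr := by
  have htopB : top ∉ B := by simp [hB]
  have hmidB : mid ∉ B := by simp [hB]
  ext z
  simp only [mem_filter, mem_inter, mem_sdiff]
  constructor
  · rintro ⟨hzA, hna, hne⟩
    have hzP := hAP hzA
    have : z ∈ B ∨ z = top ∨ z = mid := by
      by_cases h : z ∈ B
      · exact Or.inl h
      · right
        have : z ∈ ({top, mid} : Finset N) := by
          by_contra hc
          exact h (hB ▸ mem_sdiff.2 ⟨hzP, hc⟩)
        simpa using this
    rcases this with hzB | h | h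
    · refine ⟨⟨hzA, hzB⟩, fun hzFr => hna ((hadjM z hzP).2 (Or.inr hzFr))⟩
    · exact absurd ((hadjM z hzP).2 (Or.inl h)) hna
    · exact absurd h hne
  · rintro ⟨⟨hzA, hzB⟩, hzFr⟩
    refine ⟨hzA, ?_, fun h => hmidB (h ▸ hzB)⟩
    intro hc
    rcases (hadjM z (hAP hzA)).1 hc with h | h
    · exact htopB (h ▸ hzB)
    · exact hzFr h

end Comp
section Comp2

variable {N : Type*} [Fintype N] [DecidableEq N]
variable (G : SimpleGraph N) (P B Fr A : Finset N) (top mid : N)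

lemma fval_nf
    (hB : B = P \ {top, mid}) (htopP : top ∈ P) (hmidP : mid ∈ P) (hmt : mid ≠ top)
    (hadj : ∀ y ∈ B, ∀ z ∈ P, (G.Adj y z ↔ (z ∈ B ∧ z ≠ y) ∨ (z = mid ∧ y ∈ Fr)))
    (hAP : A ⊆ P) {c : N} (hc : c ∈ A ∩ B) (hcFr : c ∉ Fr) :
    fval G A c = (Fintype.card N : ℤ) * (((A ∩ B).card : ℤ) - 1)
      - (((A ∩ {top}).card : ℤ) + ((A ∩ {mid}).card : ℤ)) := by
  have hcB : c ∈ B := (mem_inter.1 hc).2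
  have hdisj : Disjoint (A ∩ {top}) (A ∩ {mid}) := by
    simp only [Finset.disjoint_left, mem_inter, mem_singleton]
    rintro a ⟨_, rfl⟩ ⟨_, h⟩
    exact hmt h.symm
  have h1 : 1 ≤ (A ∩ B).card := Finset.card_pos.2 ⟨c, hc⟩
  rw [fval, friends_nf G P B Fr A mid hadj hAP hcB hcFr,
    enemies_nf G P B Fr A top mid hB htopP hmidP hmt hadj hAP hcB hcFr,
    Finset.card_erase_of_mem hc, Finset.card_union_of_disjoint hdisj]
  push_cast [h1]
  ring

lemma fval_fr
    (hB : B = P \ {top, mid}) (hFrB : Fr ⊆ B) (htopP : top ∈ P) (hmt : mid ≠ top)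
    (hadj : ∀ y ∈ B, ∀ z ∈ P, (G.Adj y z ↔ (z ∈ B ∧ z ≠ y) ∨ (z = mid ∧ y ∈ Fr)))
    (hAP : A ⊆ P) {c : N} (hc : c ∈ A ∩ Fr) :
    fval G A c = (Fintype.card N : ℤ) * (((A ∩ B).card : ℤ) - 1 + ((A ∩ {mid}).card : ℤ))
      - ((A ∩ {top}).card : ℤ) := by
  have hmidB : mid ∉ B := by simp [hB]
  have hcFr : c ∈ Fr := (mem_inter.1 hc).2
  have hcB : c ∈ A ∩ B := mem_inter.2 ⟨(mem_inter.1 hc).1, hFrB hcFr⟩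
  have hdisj : Disjoint ((A ∩ B).erase c) (A ∩ {mid}) := by
    simp only [Finset.disjoint_left, mem_erase, mem_inter, mem_singleton]
    rintro a ⟨_, _, haB⟩ ⟨_, rfl⟩
    exact hmidB haB
  have h1 : 1 ≤ (A ∩ B).card := Finset.card_pos.2 ⟨c, hcB⟩
  rw [fval, friends_fr G P B Fr A mid hFrB hadj hAP hcFr,
    enemies_fr G P B Fr A top mid hB hFrB htopP hmt hadj hAP hcFr,
    Finset.card_union_of_disjoint hdisj, Finset.card_erase_of_mem hcB]
  push_cast [h1]
  ring

lemma fval_mid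
    (hB : B = P \ {top, mid}) (hFrB : Fr ⊆ B) (htopP : top ∈ P)
    (hadjM : ∀ z ∈ P, (G.Adj mid z ↔ z = top ∨ z ∈ Fr)) (hAP : A ⊆ P) :
    fval G A mid = (Fintype.card N : ℤ) * (((A ∩ {top}).card : ℤ) + ((A ∩ Fr).card : ℤ))
      - (((A ∩ B).card : ℤ) - ((A ∩ Fr).card : ℤ)) := by
  have htopB : top ∉ B := by simp [hB]
  have htopFr : top ∉ Fr := fun h => htopB (hFrB h)
  have hdisj : Disjoint (A ∩ {top}) (A ∩ Fr) := by
    simp only [Finset.disjoint_left, mem_inter, mem_singleton]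
    rintro a ⟨_, rfl⟩ ⟨_, h⟩
    exact htopFr h
  have hsub : A ∩ Fr ⊆ A ∩ B := Finset.inter_subset_inter_left hFrB
  have hsd : (A ∩ B) \ Fr = (A ∩ B) \ (A ∩ Fr) := by
    ext z
    simp only [mem_sdiff, mem_inter]
    tauto
  rw [fval, friends_mid G P Fr A top mid hadjM hAP,
    enemies_mid G P B Fr A top mid hB hFrB htopP hadjM hAP,
    Finset.card_union_of_disjoint hdisj, hsd, Finset.card_sdiff_of_subset hsub]
  push_cast [Finset.card_le_card hsub]
  ring

end Comp2
section Comp3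

variable {N : Type*} [Fintype N] [DecidableEq N]
variable (G : SimpleGraph N) (P B Fr A : Finset N) (top mid : N)

lemma sum_nf
    (hB : B = P \ {top, mid}) (hFrB : Fr ⊆ B) (htopP : top ∈ P) (hmidP : mid ∈ P)
    (hmt : mid ≠ top)
    (hadj : ∀ y ∈ B, ∀ z ∈ P, (G.Adj y z ↔ (z ∈ B ∧ z ≠ y) ∨ (z = mid ∧ y ∈ Fr)))
    (hAP : A ⊆ P) {y : N} (hy : y ∈ A ∩ B) (hyFr : y ∉ Fr) :
    ∑ c ∈ (A ∩ B).erase y, fval G A c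
      = ((A ∩ Fr).card : ℤ) * ((Fintype.card N : ℤ)
            * (((A ∩ B).card : ℤ) - 1 + ((A ∩ {mid}).card : ℤ)) - ((A ∩ {top}).card : ℤ))
        + (((A ∩ B).card : ℤ) - 1 - ((A ∩ Fr).card : ℤ))
          * ((Fintype.card N : ℤ) * (((A ∩ B).card : ℤ) - 1)
              - (((A ∩ {top}).card : ℤ) + ((A ∩ {mid}).card : ℤ))) := by
  have hsub : A ∩ Fr ⊆ A ∩ B := Finset.inter_subset_inter_left hFrB
  have hyFr' : y ∉ A ∩ Fr := fun h => hyFr (mem_inter.1 h).2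
  have hfs : (A ∩ Fr).card + 1 ≤ (A ∩ B).card := by
    have h1 : insert y (A ∩ Fr) ⊆ A ∩ B := Finset.insert_subset hy hsub
    have h2 := Finset.card_le_card h1
    rw [Finset.card_insert_of_notMem hyFr'] at h2
    omega
  have eq1 : ((A ∩ B).erase y).filter (fun c => c ∈ Fr) = A ∩ Fr := by
    ext z
    simp only [mem_filter, mem_erase, mem_inter]
    constructor
    · rintro ⟨⟨_, hzA, _⟩, hzFr⟩; exact ⟨hzA, hzFr⟩
    · rintro ⟨hzA, hzFr⟩
      exact ⟨⟨fun h => hyFr (h ▸ hzFr), hzA, hFrB hzFr⟩, hzFr⟩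
  have eq2 : ((A ∩ B).erase y).filter (fun c => ¬ c ∈ Fr)
      = ((A ∩ B) \ (A ∩ Fr)).erase y := by
    ext z
    simp only [mem_filter, mem_erase, mem_sdiff, mem_inter]
    tauto
  have s1 : ∑ c ∈ A ∩ Fr, fval G A c = ((A ∩ Fr).card : ℤ)
      * ((Fintype.card N : ℤ) * (((A ∩ B).card : ℤ) - 1 + ((A ∩ {mid}).card : ℤ))
          - ((A ∩ {top}).card : ℤ)) := by
    rw [Finset.sum_congr rfl (fun c hc =>
      fval_fr G P B Fr A top mid hB hFrB htopP hmt hadj hAP hc), Finset.sum_const,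
      nsmul_eq_mul]
  have hymem : y ∈ (A ∩ B) \ (A ∩ Fr) := mem_sdiff.2 ⟨hy, hyFr'⟩
  have s2 : ∑ c ∈ ((A ∩ B) \ (A ∩ Fr)).erase y, fval G A c
      = (((A ∩ B).card : ℤ) - 1 - ((A ∩ Fr).card : ℤ))
        * ((Fintype.card N : ℤ) * (((A ∩ B).card : ℤ) - 1)
            - (((A ∩ {top}).card : ℤ) + ((A ∩ {mid}).card : ℤ))) := by
    rw [Finset.sum_congr rfl (fun c hc => by
      have hc' := Finset.mem_erase.1 hc
      have hc2 := Finset.mem_sdiff.1 hc'.2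
      exact fval_nf G P B Fr A top mid hB htopP hmidP hmt hadj hAP hc2.1
        (fun h => hc2.2 (mem_inter.2 ⟨(mem_inter.1 hc2.1).1, h⟩))),
      Finset.sum_const, nsmul_eq_mul, Finset.card_erase_of_mem hymem,
      Finset.card_sdiff_of_subset hsub]
    have hc1 : (((A ∩ B).card - (A ∩ Fr).card - 1 : ℕ) : ℤ)
        = ((A ∩ B).card : ℤ) - ((A ∩ Fr).card : ℤ) - 1 := by omega
    rw [hc1]
    ring
  rw [← Finset.sum_filter_add_sum_filter_not ((A ∩ B).erase y) (fun c => c ∈ Fr), eq1, eq2,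
    s1, s2]

lemma sum_fr
    (hB : B = P \ {top, mid}) (hFrB : Fr ⊆ B) (htopP : top ∈ P) (hmidP : mid ∈ P)
    (hmt : mid ≠ top)
    (hadj : ∀ y ∈ B, ∀ z ∈ P, (G.Adj y z ↔ (z ∈ B ∧ z ≠ y) ∨ (z = mid ∧ y ∈ Fr)))
    (hadjM : ∀ z ∈ P, (G.Adj mid z ↔ z = top ∨ z ∈ Fr))
    (hAP : A ⊆ P) {y : N} (hy : y ∈ A ∩ Fr) :
    ∑ c ∈ (A ∩ B).erase y ∪ A ∩ {mid}, fval G A c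
      = (((A ∩ Fr).card : ℤ) - 1) * ((Fintype.card N : ℤ)
            * (((A ∩ B).card : ℤ) - 1 + ((A ∩ {mid}).card : ℤ)) - ((A ∩ {top}).card : ℤ))
        + (((A ∩ B).card : ℤ) - ((A ∩ Fr).card : ℤ))
          * ((Fintype.card N : ℤ) * (((A ∩ B).card : ℤ) - 1)
              - (((A ∩ {top}).card : ℤ) + ((A ∩ {mid}).card : ℤ)))
        + ((A ∩ {mid}).card : ℤ) * ((Fintype.card N : ℤ)
            * (((A ∩ {top}).card : ℤ) + ((A ∩ Fr).card : ℤ))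
              - (((A ∩ B).card : ℤ) - ((A ∩ Fr).card : ℤ))) := by
  have hmidB : mid ∉ B := by simp [hB]
  have hsub : A ∩ Fr ⊆ A ∩ B := Finset.inter_subset_inter_left hFrB
  have hyB : y ∈ A ∩ B := hsub hy
  have hyFr : y ∈ Fr := (mem_inter.1 hy).2
  have hdisj : Disjoint ((A ∩ B).erase y) (A ∩ {mid}) := by
    simp only [Finset.disjoint_left, mem_erase, mem_inter, mem_singleton]
    rintro a ⟨_, _, haB⟩ ⟨_, rfl⟩
    exact hmidB haB
  have hf1 : 1 ≤ (A ∩ Fr).card := Finset.card_pos.2 ⟨y, hy⟩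
  have eq1 : ((A ∩ B).erase y).filter (fun c => c ∈ Fr) = (A ∩ Fr).erase y := by
    ext z
    simp only [mem_filter, mem_erase, mem_inter]
    constructor
    · rintro ⟨⟨hne, hzA, _⟩, hzFr⟩; exact ⟨hne, hzA, hzFr⟩
    · rintro ⟨hne, hzA, hzFr⟩; exact ⟨⟨hne, hzA, hFrB hzFr⟩, hzFr⟩
  have eq2 : ((A ∩ B).erase y).filter (fun c => ¬ c ∈ Fr) = (A ∩ B) \ (A ∩ Fr) := by
    ext z
    simp only [mem_filter, mem_erase, mem_sdiff, mem_inter]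
    constructor
    · rintro ⟨⟨_, hzA, hzB⟩, hzFr⟩
      exact ⟨⟨hzA, hzB⟩, fun h => hzFr h.2⟩
    · rintro ⟨⟨hzA, hzB⟩, hn⟩
      refine ⟨⟨?_, hzA, hzB⟩, fun h => hn ⟨hzA, h⟩⟩
      intro h
      subst h
      exact hn ⟨hzA, hyFr⟩
  have emid : ∑ c ∈ A ∩ {mid}, fval G A c = ((A ∩ {mid}).card : ℤ)
      * ((Fintype.card N : ℤ) * (((A ∩ {top}).card : ℤ) + ((A ∩ Fr).card : ℤ))
          - (((A ∩ B).card : ℤ) - ((A ∩ Fr).card : ℤ))) := by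
    by_cases hm : mid ∈ A
    · have hms : A ∩ {mid} = {mid} := by
        ext z
        simp only [mem_inter, mem_singleton]
        exact ⟨fun h => h.2, fun h => ⟨h ▸ hm, h⟩⟩
      rw [hms, Finset.sum_singleton, Finset.card_singleton,
        fval_mid G P B Fr A top mid hB hFrB htopP hadjM hAP]
      push_cast
      ring
    · have hms : A ∩ {mid} = ∅ := by
        ext z
        simp only [mem_inter, mem_singleton, Finset.notMem_empty, iff_false, not_and]
        rintro hzA rfl
        exact hm hzA
      rw [hms]
      simp
  have s1 : ∑ c ∈ (A ∩ Fr).erase y, fval G A c = (((A ∩ Fr).card : ℤ) - 1)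
      * ((Fintype.card N : ℤ) * (((A ∩ B).card : ℤ) - 1 + ((A ∩ {mid}).card : ℤ))
          - ((A ∩ {top}).card : ℤ)) := by
    rw [Finset.sum_congr rfl (fun c hc =>
      fval_fr G P B Fr A top mid hB hFrB htopP hmt hadj hAP (Finset.mem_of_mem_erase hc)),
      Finset.sum_const, nsmul_eq_mul, Finset.card_erase_of_mem hy]
    have hc1 : (((A ∩ Fr).card - 1 : ℕ) : ℤ) = ((A ∩ Fr).card : ℤ) - 1 := by omega
    rw [hc1]
  have s2 : ∑ c ∈ (A ∩ B) \ (A ∩ Fr), fval G A c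
      = (((A ∩ B).card : ℤ) - ((A ∩ Fr).card : ℤ))
        * ((Fintype.card N : ℤ) * (((A ∩ B).card : ℤ) - 1)
            - (((A ∩ {top}).card : ℤ) + ((A ∩ {mid}).card : ℤ))) := by
    rw [Finset.sum_congr rfl (fun c hc => by
      have hc2 := Finset.mem_sdiff.1 hc
      exact fval_nf G P B Fr A top mid hB htopP hmidP hmt hadj hAP hc2.1
        (fun h => hc2.2 (mem_inter.2 ⟨(mem_inter.1 hc2.1).1, h⟩))),
      Finset.sum_const, nsmul_eq_mul, Finset.card_sdiff_of_subset hsub]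
    have hle := Finset.card_le_card hsub
    have hc1 : (((A ∩ B).card - (A ∩ Fr).card : ℕ) : ℤ)
        = ((A ∩ B).card : ℤ) - ((A ∩ Fr).card : ℤ) := by omega
    rw [hc1]
  rw [Finset.sum_union hdisj,
    ← Finset.sum_filter_add_sum_filter_not ((A ∩ B).erase y) (fun c => c ∈ Fr), eq1, eq2,
    s1, s2, emid]

end Comp3
section Comp4

variable {N : Type*} [Fintype N] [DecidableEq N]
variable (G : SimpleGraph N) (P B Fr A : Finset N) (top mid : N)

lemma util_nf_formula (w : ℚ)
    (hB : B = P \ {top, mid}) (hFrB : Fr ⊆ B) (htopP : top ∈ P) (hmidP : mid ∈ P)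
    (hmt : mid ≠ top)
    (hadj : ∀ y ∈ B, ∀ z ∈ P, (G.Adj y z ↔ (z ∈ B ∧ z ≠ y) ∨ (z = mid ∧ y ∈ Fr)))
    (hAP : A ⊆ P) {y : N} (hy : y ∈ A ∩ B) (hyFr : y ∉ Fr) (hs2 : 2 ≤ (A ∩ B).card) :
    utilAvgAL G w A y
      = ((Fintype.card N : ℚ) * (((A ∩ B).card : ℚ) - 1)
            - (((A ∩ {top}).card : ℚ) + ((A ∩ {mid}).card : ℚ)))
        + w * ((((A ∩ Fr).card : ℚ) * ((Fintype.card N : ℚ)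
              * (((A ∩ B).card : ℚ) - 1 + ((A ∩ {mid}).card : ℚ)) - ((A ∩ {top}).card : ℚ))
            + (((A ∩ B).card : ℚ) - 1 - ((A ∩ Fr).card : ℚ))
              * ((Fintype.card N : ℚ) * (((A ∩ B).card : ℚ) - 1)
                  - (((A ∩ {top}).card : ℚ) + ((A ∩ {mid}).card : ℚ))))
            / (((A ∩ B).card : ℚ) - 1)) := by
  have hyB : y ∈ B := (mem_inter.1 hy).2
  have hfr := friends_nf G P B Fr A mid hadj hAP hyB hyFr
  have hne : (friendsIn G A y).Nonempty := by
    rw [hfr, ← Finset.card_pos, Finset.card_erase_of_mem hy]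
    omega
  have hcd : ((friendsIn G A y).card : ℚ) = ((A ∩ B).card : ℚ) - 1 := by
    rw [hfr, Finset.card_erase_of_mem hy]
    have h : (((A ∩ B).card - 1 : ℕ) : ℤ) = ((A ∩ B).card : ℤ) - 1 := by omega
    exact_mod_cast h
  have hsum : ∑ c ∈ friendsIn G A y, ((fval G A c : ℤ) : ℚ)
      = ((∑ c ∈ (A ∩ B).erase y, fval G A c : ℤ) : ℚ) := by
    rw [hfr]
    push_cast
    rfl
  rw [utilAvgAL, if_pos hne, hsum, hcd,
    sum_nf G P B Fr A top mid hB hFrB htopP hmidP hmt hadj hAP hy hyFr,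
    fval_nf G P B Fr A top mid hB htopP hmidP hmt hadj hAP hy hyFr]
  push_cast
  ring

lemma util_fr_formula (w : ℚ)
    (hB : B = P \ {top, mid}) (hFrB : Fr ⊆ B) (htopP : top ∈ P) (hmidP : mid ∈ P)
    (hmt : mid ≠ top)
    (hadj : ∀ y ∈ B, ∀ z ∈ P, (G.Adj y z ↔ (z ∈ B ∧ z ≠ y) ∨ (z = mid ∧ y ∈ Fr)))
    (hadjM : ∀ z ∈ P, (G.Adj mid z ↔ z = top ∨ z ∈ Fr))
    (hAP : A ⊆ P) {y : N} (hy : y ∈ A ∩ Fr)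
    (hcard : 2 ≤ (A ∩ B).card ∨ mid ∈ A) :
    utilAvgAL G w A y
      = ((Fintype.card N : ℚ) * (((A ∩ B).card : ℚ) - 1 + ((A ∩ {mid}).card : ℚ))
            - ((A ∩ {top}).card : ℚ))
        + w * (((((A ∩ Fr).card : ℚ) - 1) * ((Fintype.card N : ℚ)
              * (((A ∩ B).card : ℚ) - 1 + ((A ∩ {mid}).card : ℚ)) - ((A ∩ {top}).card : ℚ))
            + (((A ∩ B).card : ℚ) - ((A ∩ Fr).card : ℚ))
              * ((Fintype.card N : ℚ) * (((A ∩ B).card : ℚ) - 1)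
                  - (((A ∩ {top}).card : ℚ) + ((A ∩ {mid}).card : ℚ)))
            + ((A ∩ {mid}).card : ℚ) * ((Fintype.card N : ℚ)
                * (((A ∩ {top}).card : ℚ) + ((A ∩ Fr).card : ℚ))
                  - (((A ∩ B).card : ℚ) - ((A ∩ Fr).card : ℚ))))
            / (((A ∩ B).card : ℚ) - 1 + ((A ∩ {mid}).card : ℚ))) := by
  have hmidB : mid ∉ B := by simp [hB]
  have hyFr : y ∈ Fr := (mem_inter.1 hy).2
  have hyB : y ∈ A ∩ B := mem_inter.2 ⟨(mem_inter.1 hy).1, hFrB hyFr⟩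
  have hfr := friends_fr G P B Fr A mid hFrB hadj hAP hyFr
  have hdisj : Disjoint ((A ∩ B).erase y) (A ∩ {mid}) := by
    simp only [Finset.disjoint_left, mem_erase, mem_inter, mem_singleton]
    rintro a ⟨_, _, haB⟩ ⟨_, rfl⟩
    exact hmidB haB
  have hs1 : 1 ≤ (A ∩ B).card := Finset.card_pos.2 ⟨y, hyB⟩
  have hmu : (2 ≤ (A ∩ B).card) ∨ 1 ≤ (A ∩ {mid}).card := by
    rcases hcard with h | h
    · exact Or.inl h
    · exact Or.inr (Finset.card_pos.2 ⟨mid, mem_inter.2 ⟨h, mem_singleton_self mid⟩⟩)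
  have hcd0 : (friendsIn G A y).card = (A ∩ B).card - 1 + (A ∩ {mid}).card := by
    rw [hfr, Finset.card_union_of_disjoint hdisj, Finset.card_erase_of_mem hyB]
  have hne : (friendsIn G A y).Nonempty := by
    rw [← Finset.card_pos, hcd0]
    omega
  have hcd : ((friendsIn G A y).card : ℚ)
      = ((A ∩ B).card : ℚ) - 1 + ((A ∩ {mid}).card : ℚ) := by
    rw [hcd0]
    have h : (((A ∩ B).card - 1 + (A ∩ {mid}).card : ℕ) : ℤ)
        = ((A ∩ B).card : ℤ) - 1 + ((A ∩ {mid}).card : ℤ) := by omega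
    exact_mod_cast h
  have hsum : ∑ c ∈ friendsIn G A y, ((fval G A c : ℤ) : ℚ)
      = ((∑ c ∈ (A ∩ B).erase y ∪ A ∩ {mid}, fval G A c : ℤ) : ℚ) := by
    rw [hfr]
    push_cast
    rfl
  rw [utilAvgAL, if_pos hne, hsum, hcd,
    sum_fr G P B Fr A top mid hB hFrB htopP hmidP hmt hadj hadjM hAP hy,
    fval_fr G P B Fr A top mid hB hFrB htopP hmt hadj hAP hy]
  push_cast
  ring

lemma util_empty (w : ℚ) {y : N} (h : friendsIn G A y = ∅) :
    utilAvgAL G w A y = ((fval G A y : ℤ) : ℚ) := by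
  rw [utilAvgAL, h]
  simp

lemma util_inter_le
    (hB : B = P \ {top, mid}) (hFrB : Fr ⊆ B) (htopP : top ∈ P) (hmidP : mid ∈ P)
    (hmt : mid ≠ top)
    (hadj : ∀ y ∈ B, ∀ z ∈ P, (G.Adj y z ↔ (z ∈ B ∧ z ≠ y) ∨ (z = mid ∧ y ∈ Fr)))
    (houts : ∀ x ∈ P, x ≠ top → ∀ z, G.Adj x z → z ∈ P)
    (C : Finset N) (w : ℚ) (hw : 0 ≤ w) {y : N} (hyB : y ∈ B) :
    utilAvgAL G w C y ≤ utilAvgAL G w (C ∩ P) y := by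
  have htopB : top ∉ B := by simp [hB]
  have hyP : y ∈ P := by
    have h := hB ▸ hyB
    exact (mem_sdiff.1 h).1
  have hytop : y ≠ top := fun h => htopB (h ▸ hyB)
  have hfr : ∀ c ∈ P, c ≠ top → friendsIn G C c = friendsIn G (C ∩ P) c := by
    intro c hcP hctop
    ext z
    simp only [friendsIn, mem_filter, mem_inter]
    constructor
    · rintro ⟨hzC, hadjz⟩
      exact ⟨⟨hzC, houts c hcP hctop z hadjz⟩, hadjz⟩
    · rintro ⟨⟨hzC, _⟩, hadjz⟩
      exact ⟨hzC, hadjz⟩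
  have hshift : ∀ c ∈ P, c ≠ top →
      fval G C c = fval G (C ∩ P) c - ((C \ P).card : ℤ) := by
    intro c hcP hctop
    have hen : C.filter (fun z => ¬ G.Adj c z ∧ z ≠ c)
        = (C ∩ P).filter (fun z => ¬ G.Adj c z ∧ z ≠ c) ∪ (C \ P) := by
      ext z
      simp only [mem_filter, mem_union, mem_inter, mem_sdiff]
      constructor
      · rintro ⟨hzC, hp⟩
        by_cases hzP : z ∈ P
        · exact Or.inl ⟨⟨hzC, hzP⟩, hp⟩
        · exact Or.inr ⟨hzC, hzP⟩
      · rintro (⟨⟨hzC, _⟩, hp⟩ | ⟨hzC, hzP⟩)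
        · exact ⟨hzC, hp⟩
        · exact ⟨hzC, fun h => hzP (houts c hcP hctop z h), fun h => hzP (h ▸ hcP)⟩
    have hdisj : Disjoint ((C ∩ P).filter (fun z => ¬ G.Adj c z ∧ z ≠ c)) (C \ P) := by
      simp only [Finset.disjoint_left, mem_filter, mem_inter, mem_sdiff]
      rintro a ⟨⟨_, haP⟩, _⟩ ⟨_, haP'⟩
      exact haP' haP
    rw [fval, fval, hfr c hcP hctop, hen, Finset.card_union_of_disjoint hdisj]
    push_cast
    ring
  have hfmem : ∀ c ∈ friendsIn G (C ∩ P) y, c ∈ P ∧ c ≠ top := by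
    intro c hc
    have hc' := mem_filter.1 hc
    have hcP : c ∈ P := (mem_inter.1 hc'.1).2
    refine ⟨hcP, ?_⟩
    rcases (hadj y hyB c hcP).1 hc'.2 with ⟨hcB, _⟩ | ⟨rfl, _⟩
    · exact fun h => htopB (h ▸ hcB)
    · exact fun h => hmt h
  have hm0 : (0:ℚ) ≤ ((C \ P).card : ℚ) := by positivity
  rw [utilAvgAL, utilAvgAL, hfr y hyP hytop]
  by_cases hne : (friendsIn G (C ∩ P) y).Nonempty
  · rw [if_pos hne, if_pos hne]
    have hcpos : (0:ℚ) < ((friendsIn G (C ∩ P) y).card : ℚ) := by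
      have h := Finset.card_pos.2 hne
      exact_mod_cast h
    have hsum : ∑ c ∈ friendsIn G (C ∩ P) y, ((fval G C c : ℤ) : ℚ)
        = ∑ c ∈ friendsIn G (C ∩ P) y,
            (((fval G (C ∩ P) c : ℤ) : ℚ) - ((C \ P).card : ℚ)) := by
      refine Finset.sum_congr rfl (fun c hc => ?_)
      rw [hshift c (hfmem c hc).1 (hfmem c hc).2]
      push_cast
      ring
    rw [hsum, hshift y hyP hytop, Finset.sum_sub_distrib, Finset.sum_const, nsmul_eq_mul,
      sub_div]
    have e1 : ((friendsIn G (C ∩ P) y).card : ℚ) * ((C \ P).card : ℚ)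
        / ((friendsIn G (C ∩ P) y).card : ℚ) = ((C \ P).card : ℚ) :=
      mul_div_cancel_left₀ _ (ne_of_gt hcpos)
    rw [e1]
    push_cast
    nlinarith [mul_nonneg hw hm0]
  · rw [if_neg hne, if_neg hne, hshift y hyP hytop]
    push_cast
    linarith

end Comp4
end AuxLemmas

/-- Proposition (pinched dome gadget, avg-AL): in an avg-AL altruistic hedonic game
(with weight `w ≥ n^4`) on `n` players whose network of friends `G` contains a
pinched `(d,k')`-dome gadget on `P` (`d ≥ 1`, `k' > 2d+3`, `n ≥ k'·(d+1)`) such that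
no player of `P` except the top player has a friend outside `P`, if `P` is a
coalition of the coalition structure `Γ` and a coalition `C` blocks `Γ`, then `C`
contains no player of the base clique (in particular, no fringe player). -/
theorem pinched_dome_base_not_in_blocking_avgAL {N : Type*} [Fintype N] [DecidableEq N]
    (G : SimpleGraph N) (w : ℚ) (hw : (Fintype.card N : ℚ) ^ 4 ≤ w)
    (d k' : ℕ) (hd : 1 ≤ d) (hk' : 2 * d + 3 < k')
    (hn : k' * (d + 1) ≤ Fintype.card N)
    (P : Finset N) (top mid : N) (fringe : Fin d → N)
    (hgadget : IsPinchedDomeGadget G d k' P top mid fringe)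
    (houtside : ∀ x ∈ P, x ≠ top → ∀ y : N, G.Adj x y → y ∈ P)
    (Γ : CoalitionStructure N) (hΓ : ∀ i ∈ P, Γ.part i = P)
    (C : Finset N) (hC : Blocks (utilAvgAL G w) Γ C) :
    ∀ x ∈ pdomeBase P top mid, x ∉ C := by
  intro x hxB hxC
  obtain ⟨hCne, hblock⟩ := hC
  set B : Finset N := pdomeBase P top mid with hBdef
  have hB : B = P \ {top, mid} := rfl
  set Fr : Finset N := Finset.image fringe Finset.univ with hFrdef
  have htopP : top ∈ P := hgadget.top_mem
  have hmidP : mid ∈ P := hgadget.mid_mem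
  have hmt : mid ≠ top := hgadget.mid_ne_top
  have htopB : top ∉ B := by simp [hB]
  have hmidB : mid ∉ B := by simp [hB]
  have hBP : B ⊆ P := Finset.sdiff_subset
  have hFrB : Fr ⊆ B := by
    intro z hz
    obtain ⟨i, _, rfl⟩ := Finset.mem_image.1 hz
    exact hgadget.fringe_mem i
  have hFrcard : Fr.card = d := by
    rw [hFrdef, Finset.card_image_of_injective _ hgadget.fringe_inj, Finset.card_univ,
      Fintype.card_fin]
  have hFrmem : ∀ z, z ∈ Fr ↔ ∃ i, z = fringe i := by
    intro z
    simp only [hFrdef, Finset.mem_image, Finset.mem_univ, true_and]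
    constructor
    · rintro ⟨i, hi⟩; exact ⟨i, hi.symm⟩
    · rintro ⟨i, hi⟩; exact ⟨i, hi.symm⟩
  have hadj : ∀ y ∈ B, ∀ z ∈ P, (G.Adj y z ↔ (z ∈ B ∧ z ≠ y) ∨ (z = mid ∧ y ∈ Fr)) := by
    intro y hyB z hzP
    have hyP : y ∈ P := hBP hyB
    have hytop : y ≠ top := fun h => htopB (h ▸ hyB)
    have hymid : y ≠ mid := fun h => hmidB (h ▸ hyB)
    rw [hgadget.adj_iff y hyP z hzP]
    constructor
    · rintro (⟨h1, _⟩ | ⟨_, h2⟩ | ⟨h1, h2, h3⟩ | ⟨h1, _⟩ | ⟨h1, h2⟩)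
      · exact absurd h1 hytop
      · exact absurd h2 hymid
      · exact Or.inl ⟨h2, fun he => h3 he.symm⟩
      · exact absurd h1 hymid
      · exact Or.inr ⟨h1, (hFrmem y).2 h2⟩
    · rintro (⟨hzB, hne⟩ | ⟨rfl, hyFr⟩)
      · exact Or.inr (Or.inr (Or.inl ⟨hyB, hzB, fun he => hne he.symm⟩))
      · exact Or.inr (Or.inr (Or.inr (Or.inr ⟨rfl, (hFrmem y).1 hyFr⟩)))
  have hadjM : ∀ z ∈ P, (G.Adj mid z ↔ z = top ∨ z ∈ Fr) := by
    intro z hzP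
    rw [hgadget.adj_iff mid hmidP z hzP]
    constructor
    · rintro (⟨h1, _⟩ | ⟨h1, _⟩ | ⟨h1, _, _⟩ | ⟨_, h2⟩ | ⟨h1, h2⟩)
      · exact absurd h1 hmt
      · exact Or.inl h1
      · exact absurd h1 hmidB
      · exact Or.inr ((hFrmem z).2 h2)
      · exact absurd (hFrB ((hFrmem mid).2 h2)) hmidB
    · rintro (rfl | hzFr)
      · exact Or.inr (Or.inl ⟨rfl, rfl⟩)
      · exact Or.inr (Or.inr (Or.inr (Or.inl ⟨rfl, (hFrmem z).1 hzFr⟩)))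
  -- cardinalities
  have hpairP : ({top, mid} : Finset N) ⊆ P := by
    intro z hz
    rcases Finset.mem_insert.1 hz with rfl | hz'
    · exact htopP
    · exact (Finset.mem_singleton.1 hz') ▸ hmidP
  have hpair2 : ({top, mid} : Finset N).card = 2 := by
    rw [Finset.card_insert_of_notMem (fun h => hmt (Finset.mem_singleton.1 h).symm),
      Finset.card_singleton]
  have hBcard : B.card = k' - d - 1 := by
    rw [hB, Finset.card_sdiff_of_subset hpairP, hpair2, hgadget.card_eq]
    omega
  have hbd : d + 3 ≤ B.card := by omega
  have hnb : (B.card + d + 1) * (d + 1) ≤ Fintype.card N := by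
    rw [show B.card + d + 1 = k' by omega]
    exact hn
  have hw0 : (0:ℚ) ≤ w := le_trans (by positivity) hw
  -- the blocking coalition restricted to P
  set A : Finset N := C ∩ P with hAdef
  have hAP : A ⊆ P := Finset.inter_subset_right
  have key : ∀ y ∈ A ∩ B, utilAvgAL G w P y < utilAvgAL G w A y := by
    intro y hy
    have hyA := (Finset.mem_inter.1 hy).1
    have hyB := (Finset.mem_inter.1 hy).2
    have hyC : y ∈ C := (Finset.mem_inter.1 hyA).1
    have h1 := hblock y hyC
    rw [hΓ y (hBP hyB)] at h1
    exact lt_of_lt_of_le h1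
      (util_inter_le G P B Fr top mid hB hFrB htopP hmidP hmt hadj houtside C w hw0 hyB)
  have hxP : x ∈ P := hBP hxB
  have hxA : x ∈ A ∩ B := Finset.mem_inter.2 ⟨Finset.mem_inter.2 ⟨hxC, hxP⟩, hxB⟩
  -- P-side set rewrites
  have hPB : P ∩ B = B := Finset.inter_eq_right.2 hBP
  have hPFr : P ∩ Fr = Fr := Finset.inter_eq_right.2 (fun z hz => hBP (hFrB hz))
  have hPtop : P ∩ {top} = {top} :=
    Finset.inter_eq_right.2 (Finset.singleton_subset_iff.2 htopP)
  have hPmid : P ∩ {mid} = {mid} :=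
    Finset.inter_eq_right.2 (Finset.singleton_subset_iff.2 hmidP)
  -- basic numeric facts
  have hT1 : (A ∩ {top}).card ≤ 1 := by
    
    calc (A ∩ {top}).card ≤ ({top} : Finset N).card :=
          Finset.card_le_card Finset.inter_subset_right
      _ = 1 := Finset.card_singleton top
  have hU1 : (A ∩ {mid}).card ≤ 1 := by
    calc (A ∩ {mid}).card ≤ ({mid} : Finset N).card :=
          Finset.card_le_card Finset.inter_subset_right
      _ = 1 := Finset.card_singleton mid
  have hF_d : (A ∩ Fr).card ≤ d := by
    calc (A ∩ Fr).card ≤ Fr.card := Finset.card_le_card Finset.inter_subset_right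
      _ = d := hFrcard
  have hS_b : (A ∩ B).card ≤ B.card := Finset.card_le_card Finset.inter_subset_right
  have hS1 : 1 ≤ (A ∩ B).card := Finset.card_pos.2 ⟨x, hxA⟩
  have hsubFB : A ∩ Fr ⊆ A ∩ B := Finset.inter_subset_inter_left hFrB
  -- casts
  have hdZ : (1:ℤ) ≤ (d:ℤ) := by exact_mod_cast hd
  have hbZ : (d:ℤ) + 3 ≤ (B.card : ℤ) := by exact_mod_cast hbd
  have hnZ : ((B.card : ℤ) + (d:ℤ) + 1) * ((d:ℤ) + 1) ≤ (Fintype.card N : ℤ) := by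
    exact_mod_cast hnb
  have htZ0 : (0:ℤ) ≤ ((A ∩ {top}).card : ℤ) := by positivity
  have htZ1 : ((A ∩ {top}).card : ℤ) ≤ 1 := by exact_mod_cast hT1
  have huZ0 : (0:ℤ) ≤ ((A ∩ {mid}).card : ℤ) := by positivity
  have huZ1 : ((A ∩ {mid}).card : ℤ) ≤ 1 := by exact_mod_cast hU1
  have hfZ0 : (0:ℤ) ≤ ((A ∩ Fr).card : ℤ) := by positivity
  have hfZd : ((A ∩ Fr).card : ℤ) ≤ (d:ℤ) := by exact_mod_cast hF_d
  have hsZ1 : (1:ℤ) ≤ ((A ∩ B).card : ℤ) := by exact_mod_cast hS1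
  have hsZb : ((A ∩ B).card : ℤ) ≤ (B.card : ℤ) := by exact_mod_cast hS_b
  have hfsZ : ((A ∩ Fr).card : ℤ) ≤ ((A ∩ B).card : ℤ) := by
    exact_mod_cast Finset.card_le_card hsubFB
  have hqpos : (0:ℚ) < (B.card : ℚ) - 1 := by
    have : (4:ℚ) ≤ (B.card : ℚ) := by exact_mod_cast (by omega : 4 ≤ B.card)
    linarith
  have hv0 : (0:ℚ) ≤ (Fintype.card N : ℚ) ^ 4 := by positivity
  -- P-side utility lower bounds (used in degenerate cases)
  have hnQ : ((B.card:ℚ) + d + 1) * ((d:ℚ) + 1) ≤ (Fintype.card N : ℚ) := by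
    exact_mod_cast hnb
  have hdQ : (1:ℚ) ≤ (d:ℚ) := by exact_mod_cast hd
  have hbQ : (d:ℚ) + 3 ≤ (B.card:ℚ) := by exact_mod_cast hbd
  have hnbQ : 2 * (B.card:ℚ) + 4 ≤ (Fintype.card N : ℚ) := by nlinarith
  by_cases hAeqP : A = P
  · have h := key x hxA
    rw [hAeqP] at h
    exact lt_irrefl _ h
  by_cases hall : A ∩ B ⊆ Fr
  · -- all members of the blocking coalition inside the base are fringe players
    have hxFr : x ∈ Fr := hall hxA
    have hxAFr : x ∈ A ∩ Fr :=
      Finset.mem_inter.2 ⟨(Finset.mem_inter.1 hxA).1, hxFr⟩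
    have hSF : A ∩ B = A ∩ Fr := Finset.Subset.antisymm
      (fun z hz => Finset.mem_inter.2 ⟨(Finset.mem_inter.1 hz).1, hall hz⟩) hsubFB
    have hFSQ : ((A ∩ Fr).card : ℚ) = ((A ∩ B).card : ℚ) := by rw [hSF]
    have hxPFr : x ∈ P ∩ Fr := Finset.mem_inter.2 ⟨hxP, hxFr⟩
    have hPutil := util_fr_formula G P B Fr P top mid w rfl hFrB htopP hmidP hmt hadj hadjM
      subset_rfl hxPFr (Or.inr hmidP)
    rw [hPB, hPFr, hPtop, hPmid] at hPutil
    simp only [Finset.card_singleton, Nat.cast_one] at hPutil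
    rw [hFrcard] at hPutil
    have hq2pos : (0:ℚ) < (B.card : ℚ) - 1 + 1 := by linarith
    by_cases hdeg : 2 ≤ (A ∩ B).card ∨ mid ∈ A
    · have hAutil := util_fr_formula G P B Fr A top mid w rfl hFrB htopP hmidP hmt hadj hadjM
        hAP hxAFr hdeg
      have hUA1 : 1 ≤ (A ∩ {mid}).card ∨ 2 ≤ (A ∩ B).card := by
        rcases hdeg with h | h
        · exact Or.inr h
        · exact Or.inl (Finset.card_pos.2 ⟨mid, Finset.mem_inter.2 ⟨h, Finset.mem_singleton_self mid⟩⟩)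
      have hpZ1 : (1:ℤ) ≤ ((A ∩ B).card : ℤ) - 1 + ((A ∩ {mid}).card : ℤ) := by
        rcases hUA1 with h | h
        · have : (1:ℤ) ≤ ((A ∩ {mid}).card : ℤ) := by exact_mod_cast h
          linarith
        · have : (2:ℤ) ≤ ((A ∩ B).card : ℤ) := by exact_mod_cast h
          linarith
      have hppos : (0:ℚ) < ((A ∩ B).card : ℚ) - 1 + ((A ∩ {mid}).card : ℚ) := by
        have : ((1:ℤ):ℚ) ≤ (((A ∩ B).card : ℤ) : ℚ) - 1 + (((A ∩ {mid}).card : ℤ) : ℚ) := by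
          exact_mod_cast hpZ1
        push_cast at this
        linarith
      have hsdZ : ((A ∩ B).card : ℤ) ≤ (d:ℤ) := by
        rw [show ((A ∩ B).card : ℤ) = ((A ∩ Fr).card : ℤ) from by rw [hSF]]
        exact hfZd
      have hz := fr_all_case (Fintype.card N : ℤ) (B.card : ℤ) (d:ℤ) ((A ∩ B).card : ℤ)
        ((A ∩ {top}).card : ℤ) ((A ∩ {mid}).card : ℤ) hdZ hbZ hnZ htZ0 htZ1 huZ0 huZ1
        hsZ1 hsdZ hpZ1
      refine absurd (key x hxA) (not_lt.2 ?_)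
      rw [hAutil, hPutil, hFSQ]
      refine util_le_helper _ _ _ _ _ _ ((Fintype.card N : ℚ)^4) w hppos hq2pos hv0 hw ?_ ?_
      · have h : ((_ : ℤ) : ℚ) ≤ ((_ : ℤ) : ℚ) := Int.cast_le.mpr hz.1
        push_cast at h
        push_cast
        linarith
      · have h : ((_ : ℤ) : ℚ) ≤ ((_ : ℤ) : ℚ) := Int.cast_le.mpr hz.2
        push_cast at h
        push_cast
        linarith
    · -- degenerate: x is alone with no friends in A
      push_neg at hdeg
      obtain ⟨hslt, hmidA⟩ := hdeg
      have hAB1 : (A ∩ B).card = 1 := by omega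
      have hABx : A ∩ B = {x} := by
        rw [Finset.card_eq_one] at hAB1
        obtain ⟨a, ha⟩ := hAB1
        rw [ha] at hxA ⊢
        rw [Finset.mem_singleton.1 hxA]
      have hAmid : A ∩ {mid} = ∅ := by
        ext z
        simp only [Finset.mem_inter, Finset.mem_singleton, Finset.notMem_empty, iff_false,
          not_and]
        rintro hzA rfl
        exact hmidA hzA
      have hempty : friendsIn G A x = ∅ := by
        rw [friends_fr G P B Fr A mid hFrB hadj hAP hxFr, hABx, hAmid,
          Finset.erase_singleton, Finset.empty_union]
      have hAval : utilAvgAL G w A x ≤ 0 := by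
        rw [util_empty G A w hempty, fval_fr G P B Fr A top mid rfl hFrB htopP hmt hadj hAP
          hxAFr, hABx, hAmid]
        simp only [Finset.card_singleton, Finset.card_empty]
        push_cast
        have : (0:ℚ) ≤ (((A ∩ {top}).card : ℤ) : ℚ) := by positivity
        push_cast at this
        linarith
      have hPval : 0 ≤ utilAvgAL G w P x := by
        rw [hPutil]
        have h1 : (0:ℚ) ≤ (Fintype.card N : ℚ) * ((B.card:ℚ) - 1 + 1) - 1 := by nlinarith
        have h2 : (0:ℚ) ≤ ((d:ℚ) - 1) * ((Fintype.card N : ℚ) * ((B.card:ℚ) - 1 + 1) - 1)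
            + ((B.card:ℚ) - (d:ℚ)) * ((Fintype.card N : ℚ) * ((B.card:ℚ) - 1) - (1 + 1))
            + 1 * ((Fintype.card N : ℚ) * (1 + (d:ℚ)) - ((B.card:ℚ) - (d:ℚ))) := by nlinarith
        have h3 : (0:ℚ) ≤ w * ((((d:ℚ) - 1) * ((Fintype.card N : ℚ) * ((B.card:ℚ) - 1 + 1) - 1)
            + ((B.card:ℚ) - (d:ℚ)) * ((Fintype.card N : ℚ) * ((B.card:ℚ) - 1) - (1 + 1))
            + 1 * ((Fintype.card N : ℚ) * (1 + (d:ℚ)) - ((B.card:ℚ) - (d:ℚ))))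
            / ((B.card:ℚ) - 1 + 1)) := mul_nonneg hw0 (div_nonneg h2 hq2pos.le)
        linarith [h1, h3]
      exact absurd (key x hxA) (not_lt.2 (le_trans hAval hPval))
  -- there is a non-fringe member y of the blocking coalition inside the base
  obtain ⟨y, hyAB, hyFr⟩ := Finset.not_subset.1 hall
  have hyB : y ∈ B := (Finset.mem_inter.1 hyAB).2
  have hyP : y ∈ P := hBP hyB
  by_cases hsp : A ∩ B = B ∧ mid ∈ A
  · obtain ⟨hABB, hmidA⟩ := hsp
    have hAFr : A ∩ Fr = Fr := by
      apply Finset.inter_eq_right.2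
      intro z hz
      have hzB : z ∈ A ∩ B := by rw [hABB]; exact hFrB hz
      exact (Finset.mem_inter.1 hzB).1
    by_cases htopA : top ∈ A
    · -- then A = P, contradiction
      refine absurd (Finset.Subset.antisymm hAP ?_) hAeqP
      intro z hz
      have hcases : z ∈ B ∨ z = top ∨ z = mid := by
        by_cases h : z ∈ B
        · exact Or.inl h
        · right
          have hzz : z ∈ ({top, mid} : Finset N) := by
            by_contra hc
            exact h (hB ▸ Finset.mem_sdiff.2 ⟨hz, hc⟩)
          simpa using hzz
      rcases hcases with h | rfl | rfl
      · have hz2 : z ∈ A ∩ B := by rw [hABB]; exact h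
        exact (Finset.mem_inter.1 hz2).1
      · exact htopA
      · exact hmidA
    · -- special configuration (t,μ,s,f) = (0,1,b,d): a fringe member blocks the block
      have hAtop : A ∩ {top} = ∅ := by
        ext z
        simp only [Finset.mem_inter, Finset.mem_singleton, Finset.notMem_empty, iff_false,
          not_and]
        rintro hzA rfl
        exact htopA hzA
      have hAmid1 : A ∩ {mid} = {mid} := by
        ext z
        simp only [Finset.mem_inter, Finset.mem_singleton]
        exact ⟨fun h => h.2, fun h => ⟨h ▸ hmidA, h⟩⟩
      obtain ⟨y', hy'Fr⟩ := Finset.card_pos.1 (show 0 < Fr.card by rw [hFrcard]; omega)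
      have hy'AFr : y' ∈ A ∩ Fr := by rw [hAFr]; exact hy'Fr
      have hy'PFr : y' ∈ P ∩ Fr := Finset.mem_inter.2 ⟨hBP (hFrB hy'Fr), hy'Fr⟩
      have hPutil := util_fr_formula G P B Fr P top mid w rfl hFrB htopP hmidP hmt hadj hadjM
        subset_rfl hy'PFr (Or.inr hmidP)
      rw [hPB, hPFr, hPtop, hPmid] at hPutil
      simp only [Finset.card_singleton, Nat.cast_one] at hPutil
      rw [hFrcard] at hPutil
      have hAutil := util_fr_formula G P B Fr A top mid w rfl hFrB htopP hmidP hmt hadj hadjM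
        hAP hy'AFr (Or.inr hmidA)
      rw [hABB, hAFr, hAtop, hAmid1] at hAutil
      simp only [Finset.card_singleton, Finset.card_empty, Nat.cast_one, Nat.cast_zero]
        at hAutil
      rw [hFrcard] at hAutil
      have hq2pos : (0:ℚ) < (B.card:ℚ) - 1 + 1 := by linarith
      have hz := fr_special_case (Fintype.card N : ℤ) (B.card : ℤ) (d:ℤ) hdZ hbZ hnZ
      refine absurd (key y' (hsubFB hy'AFr)) (not_lt.2 ?_)
      rw [hAutil, hPutil]
      refine util_le_helper _ _ _ _ _ _ ((Fintype.card N : ℚ)^4) w hq2pos hq2pos hv0 hw ?_ ?_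
      · have h : ((_ : ℤ) : ℚ) ≤ ((_ : ℤ) : ℚ) := Int.cast_le.mpr hz.1
        push_cast at h
        push_cast
        linarith
      · have h : ((_ : ℤ) : ℚ) ≤ ((_ : ℤ) : ℚ) := Int.cast_le.mpr hz.2
        push_cast at h
        push_cast
        linarith
  · -- non-fringe witness
    have hyPB : y ∈ P ∩ B := Finset.mem_inter.2 ⟨hyP, hyB⟩
    have hPs2 : 2 ≤ (P ∩ B).card := by rw [hPB]; omega
    have hPutil := util_nf_formula G P B Fr P top mid w rfl hFrB htopP hmidP hmt hadj
      subset_rfl hyPB hyFr hPs2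
    rw [hPB, hPFr, hPtop, hPmid] at hPutil
    simp only [Finset.card_singleton, Nat.cast_one] at hPutil
    rw [hFrcard] at hPutil
    by_cases hs2 : 2 ≤ (A ∩ B).card
    · have hfsy : (A ∩ Fr).card + 1 ≤ (A ∩ B).card := by
        have hyFr' : y ∉ A ∩ Fr := fun h => hyFr (Finset.mem_inter.1 h).2
        have h1 : insert y (A ∩ Fr) ⊆ A ∩ B := Finset.insert_subset hyAB hsubFB
        have h2 := Finset.card_le_card h1
        rw [Finset.card_insert_of_notMem hyFr'] at h2
        omega
      have hfsZ1 : ((A ∩ Fr).card : ℤ) ≤ ((A ∩ B).card : ℤ) - 1 := by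
        have h : (((A ∩ Fr).card : ℤ) + 1) ≤ ((A ∩ B).card : ℤ) := by exact_mod_cast hfsy
        linarith
      have hsZ2 : (2:ℤ) ≤ ((A ∩ B).card : ℤ) := by exact_mod_cast hs2
      have hex : ¬(((A ∩ B).card : ℤ) = (B.card : ℤ) ∧ ((A ∩ {mid}).card : ℤ) = 1
          ∧ ((A ∩ Fr).card : ℤ) = (d:ℤ)) := by
        rintro ⟨e1, e2, e3⟩
        apply hsp
        constructor
        · have e1' : (A ∩ B).card = B.card := by exact_mod_cast e1
          exact Finset.eq_of_subset_of_card_le Finset.inter_subset_right (le_of_eq e1'.symm)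
        · have e2' : (A ∩ {mid}).card = 1 := by exact_mod_cast e2
          obtain ⟨z, hz⟩ := Finset.card_pos.1 (show 0 < (A ∩ {mid}).card by omega)
          have hz' := Finset.mem_inter.1 hz
          exact (Finset.mem_singleton.1 hz'.2) ▸ hz'.1
      have hz := nf_case (Fintype.card N : ℤ) (B.card : ℤ) (d:ℤ) ((A ∩ B).card : ℤ)
        ((A ∩ Fr).card : ℤ) ((A ∩ {top}).card : ℤ) ((A ∩ {mid}).card : ℤ)
        hdZ hbZ hnZ htZ0 htZ1 huZ0 huZ1 hsZ2 hsZb hfZ0 hfZd hfsZ1 hex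
      have hAutil := util_nf_formula G P B Fr A top mid w rfl hFrB htopP hmidP hmt hadj
        hAP hyAB hyFr hs2
      have hppos : (0:ℚ) < ((A ∩ B).card : ℚ) - 1 := by
        have h : (2:ℚ) ≤ ((A ∩ B).card : ℚ) := by exact_mod_cast hs2
        linarith
      refine absurd (key y hyAB) (not_lt.2 ?_)
      rw [hAutil, hPutil]
      refine util_le_helper _ _ _ _ _ _ ((Fintype.card N : ℚ)^4) w hppos hqpos hv0 hw ?_ ?_
      · have h : ((_ : ℤ) : ℚ) ≤ ((_ : ℤ) : ℚ) := Int.cast_le.mpr hz.1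
        push_cast at h
        push_cast
        linarith
      · have h : ((_ : ℤ) : ℚ) ≤ ((_ : ℤ) : ℚ) := Int.cast_le.mpr hz.2
        push_cast at h
        push_cast
        linarith
    · -- degenerate: y is alone in A ∩ B with no friends
      have hAB1 : (A ∩ B).card = 1 := by omega
      have hABy : A ∩ B = {y} := by
        rw [Finset.card_eq_one] at hAB1
        obtain ⟨a, ha⟩ := hAB1
        rw [ha] at hyAB ⊢
        rw [Finset.mem_singleton.1 hyAB]
      have hempty : friendsIn G A y = ∅ := by
        rw [friends_nf G P B Fr A mid hadj hAP hyB hyFr, hABy, Finset.erase_singleton]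
      have hAval : utilAvgAL G w A y ≤ 0 := by
        rw [util_empty G A w hempty,
          fval_nf G P B Fr A top mid rfl htopP hmidP hmt hadj hAP hyAB hyFr, hABy]
        simp only [Finset.card_singleton, Nat.cast_one]
        have h1 : (0:ℚ) ≤ (((A ∩ {top}).card : ℤ) : ℚ) := by positivity
        have h2 : (0:ℚ) ≤ (((A ∩ {mid}).card : ℤ) : ℚ) := by positivity
        push_cast at h1 h2 ⊢
        linarith
      have hPval : 0 ≤ utilAvgAL G w P y := by
        rw [hPutil]
        have h1 : (0:ℚ) ≤ (Fintype.card N : ℚ) * ((B.card:ℚ) - 1) - (1 + 1) := by nlinarith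
        have h2 : (0:ℚ) ≤ (d:ℚ) * ((Fintype.card N : ℚ) * ((B.card:ℚ) - 1 + 1) - 1)
            + ((B.card:ℚ) - 1 - (d:ℚ))
              * ((Fintype.card N : ℚ) * ((B.card:ℚ) - 1) - (1 + 1)) := by nlinarith
        have h3 : (0:ℚ) ≤ w * (((d:ℚ) * ((Fintype.card N : ℚ) * ((B.card:ℚ) - 1 + 1) - 1)
            + ((B.card:ℚ) - 1 - (d:ℚ))
              * ((Fintype.card N : ℚ) * ((B.card:ℚ) - 1) - (1 + 1)))
            / ((B.card:ℚ) - 1)) := mul_nonneg hw0 (div_nonneg h2 hqpos.le)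
        linarith [h1, h3]
      exact absurd (key y hyAB) (not_lt.2 (le_trans hAval hPval))
end

section
/- Let H = (V, E) be a finite simple graph and let k ≥ 3 be an odd integer. In the min-based reduction instance built from (H, k), under min-EQ utilities, the coalition structure Γ is not core-stable if and only if H contains a clique of size k. -/
open Finset
open scoped Classical

section AHGDefs

variable {N : Type*} [Fintype N] [DecidableEq N]

/-- Cyclic distance between two positions on a cycle of length `k'`. -/
def cycDist (k' : ℕ) (a b : Fin k') : ℕ :=
  min ((a.val + k' - b.val) % k') ((b.val + k' - a.val) % k')

/-- `P` carries an `(r,k')`-circulant gadget of `G`: its `k'` players are arranged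
along a cycle of length `k'`, and two players are adjacent iff their distance along
the cycle is at most `r/2` (so each player has `r` friends in the gadget). -/
def IsCirculantGadget (G : SimpleGraph N) (r k' : ℕ) (P : Finset N) : Prop :=
  ∃ f : Fin k' → N, Function.Injective f ∧ Finset.univ.image f = P ∧
    ∀ a b : Fin k', (G.Adj (f a) (f b) ↔ (a ≠ b ∧ cycDist k' a b ≤ r / 2))

/-- The gadget size `k' = k·(k choose 2) + k + 1` of the min-based reduction. -/
def minK' (k : ℕ) : ℕ := k * Nat.choose k 2 + k + 1

variable {V : Type*} [Fintype V] [DecidableEq V]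

/-- The min-based reduction instance built from the graph `H` and an odd `k ≥ 3`:
`G` is the constructed network of friends on the player set `N`; `Pv v`, `Pe e`, and
`Pve v e` are the player sets of the `(k−1,k')`-circulant vertex, edge, and incidence
gadgets with distinguished players `vp v`, `ep e`, and `bp v e` respectively; `Ae e`
are the `k−3` dummy players of edge `e`, forming a clique. Each `bp v e` is further
adjacent to `vp v` and `ep e`, each dummy in `Ae e` to `ep e` and to both incidence
players of `e`, and there are no other edges. -/
structure MinReduction (H : SimpleGraph V) (k : ℕ) (G : SimpleGraph N)
    (Pv : V → Finset N) (Pe : Sym2 V → Finset N) (Pve : V → Sym2 V → Finset N)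
    (Ae : Sym2 V → Finset N) (vp : V → N) (ep : Sym2 V → N) (bp : V → Sym2 V → N) :
    Prop where
  circ_v : ∀ v : V, IsCirculantGadget G (k - 1) (minK' k) (Pv v)
  circ_e : ∀ e ∈ H.edgeSet, IsCirculantGadget G (k - 1) (minK' k) (Pe e)
  circ_ve : ∀ (v : V), ∀ e ∈ H.edgeSet, v ∈ e →
    IsCirculantGadget G (k - 1) (minK' k) (Pve v e)
  vp_mem : ∀ v : V, vp v ∈ Pv v
  ep_mem : ∀ e ∈ H.edgeSet, ep e ∈ Pe e
  bp_mem : ∀ (v : V), ∀ e ∈ H.edgeSet, v ∈ e → bp v e ∈ Pve v e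
  Ae_card : ∀ e ∈ H.edgeSet, (Ae e).card = k - 3
  Ae_clique : ∀ e ∈ H.edgeSet, ∀ a ∈ Ae e, ∀ b ∈ Ae e, a ≠ b → G.Adj a b
  disj_vv : ∀ v w : V, v ≠ w → Disjoint (Pv v) (Pv w)
  disj_ee : ∀ e ∈ H.edgeSet, ∀ f ∈ H.edgeSet, e ≠ f → Disjoint (Pe e) (Pe f)
  disj_bb : ∀ (v : V), ∀ e ∈ H.edgeSet, v ∈ e → ∀ (w : V), ∀ f ∈ H.edgeSet, w ∈ f →
    (v, e) ≠ (w, f) → Disjoint (Pve v e) (Pve w f)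
  disj_aa : ∀ e ∈ H.edgeSet, ∀ f ∈ H.edgeSet, e ≠ f → Disjoint (Ae e) (Ae f)
  disj_v_e : ∀ (v : V), ∀ e ∈ H.edgeSet, Disjoint (Pv v) (Pe e)
  disj_v_b : ∀ (v w : V), ∀ f ∈ H.edgeSet, w ∈ f → Disjoint (Pv v) (Pve w f)
  disj_v_a : ∀ (v : V), ∀ e ∈ H.edgeSet, Disjoint (Pv v) (Ae e)
  disj_e_b : ∀ e ∈ H.edgeSet, ∀ (w : V), ∀ f ∈ H.edgeSet, w ∈ f →
    Disjoint (Pe e) (Pve w f)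
  disj_e_a : ∀ e ∈ H.edgeSet, ∀ f ∈ H.edgeSet, Disjoint (Pe e) (Ae f)
  disj_b_a : ∀ (v : V), ∀ e ∈ H.edgeSet, v ∈ e → ∀ f ∈ H.edgeSet,
    Disjoint (Pve v e) (Ae f)
  cover : ∀ x : N, (∃ v : V, x ∈ Pv v) ∨ (∃ e ∈ H.edgeSet, x ∈ Pe e) ∨
    (∃ (v : V), ∃ e ∈ H.edgeSet, v ∈ e ∧ x ∈ Pve v e) ∨ (∃ e ∈ H.edgeSet, x ∈ Ae e)
  adj_bv : ∀ (v : V), ∀ e ∈ H.edgeSet, v ∈ e → G.Adj (bp v e) (vp v)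
  adj_be : ∀ (v : V), ∀ e ∈ H.edgeSet, v ∈ e → G.Adj (bp v e) (ep e)
  adj_ae : ∀ e ∈ H.edgeSet, ∀ a ∈ Ae e, G.Adj a (ep e)
  adj_ab : ∀ (v : V), ∀ e ∈ H.edgeSet, v ∈ e → ∀ a ∈ Ae e, G.Adj a (bp v e)
  adj_cases : ∀ x y : N, G.Adj x y →
    (∃ v : V, x ∈ Pv v ∧ y ∈ Pv v) ∨
    (∃ e ∈ H.edgeSet, x ∈ Pe e ∧ y ∈ Pe e) ∨
    (∃ (v : V), ∃ e ∈ H.edgeSet, v ∈ e ∧ x ∈ Pve v e ∧ y ∈ Pve v e) ∨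
    (∃ e ∈ H.edgeSet, x ∈ Ae e ∧ y ∈ Ae e) ∨
    (∃ (v : V), ∃ e ∈ H.edgeSet, v ∈ e ∧
      ((x = bp v e ∧ y = vp v) ∨ (y = bp v e ∧ x = vp v))) ∨
    (∃ (v : V), ∃ e ∈ H.edgeSet, v ∈ e ∧
      ((x = bp v e ∧ y = ep e) ∨ (y = bp v e ∧ x = ep e))) ∨
    (∃ e ∈ H.edgeSet, (x ∈ Ae e ∧ y = ep e) ∨ (y ∈ Ae e ∧ x = ep e)) ∨
    (∃ (v : V), ∃ e ∈ H.edgeSet, v ∈ e ∧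
      ((x ∈ Ae e ∧ y = bp v e) ∨ (y ∈ Ae e ∧ x = bp v e)))

/-- `Γ` is the coalition structure of the min-based reduction instance: its coalitions
are exactly the gadget player sets and the dummy sets. -/
def IsMinGamma (H : SimpleGraph V) (Pv : V → Finset N) (Pe : Sym2 V → Finset N)
    (Pve : V → Sym2 V → Finset N) (Ae : Sym2 V → Finset N)
    (Γ : CoalitionStructure N) : Prop :=
  (∀ v : V, ∀ i ∈ Pv v, Γ.part i = Pv v) ∧
  (∀ e ∈ H.edgeSet, ∀ i ∈ Pe e, Γ.part i = Pe e) ∧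
  (∀ (v : V), ∀ e ∈ H.edgeSet, v ∈ e → ∀ i ∈ Pve v e, Γ.part i = Pve v e) ∧
  (∀ e ∈ H.edgeSet, ∀ i ∈ Ae e, Γ.part i = Ae e)
end AHGDefs

/-!
A member of a coalition of `m` players with `f` friends there has valuation `(n + 1) f - (m - 1)`;
as `m ≤ n`, valuations compare first by the number of friends and then inversely by coalition
size. Every gadget player of `Γ` has `k - 1` friends in a coalition of `k'` players, so each gadget
player of a blocking coalition `C` has at least `k - 1` friends in `C`, and exactly `k - 1` only if
`|C| < k'`. A gadget player other than the distinguished one cannot be in `C`: its friends in `C`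
would be all of its gadget friends, and this propagates around the cycle to the whole gadget.
Hence the vertex players in `C` form a set `K` in which each vertex has at least `k - 1` edges
whose edge, incidence and dummy players (`k` in all) lie in `C`. Double counting and
`|C| < k' = k (k choose 2) + k + 1` give `|K| ≤ k`, so `K` is a `k`-clique. Conversely the vertex
players of a `k`-clique together with these players of its edges form a coalition of `k' - 1`
players in which everybody has at least `k - 1` friends, and it blocks `Γ`.
-/

/-- A member of a coalition of `m` players with `f` friends in it has `m - 1 - f` enemies there,
so its friend-oriented valuation in a game with `n` players is `n * f - (m - 1 - f)`. -/
def fvalOfCounts (n f m : ℕ) : ℤ := ((n : ℤ) + 1) * f - ((m : ℤ) - 1)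

theorem fvalOfCounts_lt_fvalOfCounts_iff {n f f' m m' : ℕ} (hm : 0 < m) (hm' : 0 < m')
    (hmn : m ≤ n + 1) (hmn' : m' ≤ n + 1) :
    fvalOfCounts n f m < fvalOfCounts n f' m' ↔ f < f' ∨ f = f' ∧ m' < m := by
  unfold fvalOfCounts
  rcases lt_trichotomy f f' with h | rfl | h
  · have : ((n : ℤ) + 1) * (f + 1) ≤ ((n : ℤ) + 1) * f' := by gcongr; exact_mod_cast h
    simp only [h, true_or, iff_true]
    linarith
  · simp only [lt_irrefl, true_and, false_or]
    omega
  · have : ((n : ℤ) + 1) * (f' + 1) ≤ ((n : ℤ) + 1) * f := by gcongr; exact_mod_cast h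
    simp only [h.not_gt, h.ne', false_and, or_false, iff_false, not_lt]
    linarith

section Valuations

variable {N : Type*} {G : SimpleGraph N} {C : Finset N} {x i : N}

theorem card_le_card_friendsIn {S : Finset N} (hSC : S ⊆ C) (hadj : ∀ y ∈ S, G.Adj x y) :
    #S ≤ #(friendsIn G C x) :=
  card_le_card fun y hy => mem_filter.mpr ⟨hSC hy, hadj y hy⟩

variable [DecidableEq N]

theorem friendsIn_subset_erase (G : SimpleGraph N) (C : Finset N) (x : N) :
    friendsIn G C x ⊆ C.erase x :=
  fun _ hy => mem_erase.mpr ⟨(mem_filter.mp hy).2.ne', (mem_filter.mp hy).1⟩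

theorem insert_friendsIn_subset (hi : i ∈ C) : insert i (friendsIn G C i) ⊆ C :=
  insert_subset hi (filter_subset _ _)

theorem card_friendsIn_lt (hx : x ∈ C) : #(friendsIn G C x) < #C :=
  (card_le_card (friendsIn_subset_erase G C x)).trans_lt (card_erase_lt_of_mem hx)

theorem friendsIn_eq_erase_of_isClique (hC : G.IsClique (C : Set N)) (hx : x ∈ C) :
    friendsIn G C x = C.erase x := by
  refine (friendsIn_subset_erase G C x).antisymm fun y hy => mem_filter.mpr ?_
  obtain ⟨hyx, hy⟩ := mem_erase.mp hy
  exact ⟨hy, hC hx hy hyx.symm⟩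

variable [Fintype N]

theorem fval_eq_fvalOfCounts (hx : x ∈ C) :
    fval G C x = fvalOfCounts (Fintype.card N) #(friendsIn G C x) #C := by
  have hsplit : (#(friendsIn G C x) : ℤ) + #(C.filter fun j => ¬ G.Adj x j) = #C := by
    exact_mod_cast card_filter_add_card_filter_not _
  have henemies : C.filter (fun j => ¬ G.Adj x j ∧ j ≠ x)
      = (C.filter fun j => ¬ G.Adj x j).erase x := by
    ext j; simp only [mem_filter, mem_erase]; tauto
  have hxmem : x ∈ C.filter fun j => ¬ G.Adj x j := mem_filter.mpr ⟨hx, G.irrefl⟩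
  rw [fval, fvalOfCounts, henemies, card_erase_of_mem hxmem,
    Nat.cast_sub (card_pos.mpr ⟨x, hxmem⟩)]
  push_cast
  linarith

theorem utilMinEQ_le_fval (C : Finset N) (i : N) : utilMinEQ G C i ≤ fval G C i :=
  inf'_le _ (mem_insert_self _ _)

theorem lt_utilMinEQ_of_forall_lt_fval {t : ℤ} (hi : i ∈ C) (h : ∀ c ∈ C, t < fval G C c) :
    t < utilMinEQ G C i :=
  (lt_inf'_iff _).mpr fun c hc => h c (insert_friendsIn_subset hi hc)

theorem utilMinEQ_eq_of_regular {r : ℕ} (hreg : ∀ c ∈ C, #(friendsIn G C c) = r)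
    (hi : i ∈ C) :
    utilMinEQ G C i = fvalOfCounts (Fintype.card N) r #C := by
  have hval : ∀ c ∈ C, fval G C c = fvalOfCounts (Fintype.card N) r #C := fun c hc => by
    rw [fval_eq_fvalOfCounts hc, hreg c hc]
  refine le_antisymm (hval i hi ▸ utilMinEQ_le_fval C i) (le_inf' _ _ fun c hc => ?_)
  exact (hval c (insert_friendsIn_subset hi hc)).ge

theorem utilMinEQ_eq_of_isClique (hC : G.IsClique (C : Set N)) (hi : i ∈ C) :
    utilMinEQ G C i = fvalOfCounts (Fintype.card N) (#C - 1) #C :=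
  utilMinEQ_eq_of_regular (fun c hc => by
    rw [friendsIn_eq_erase_of_isClique hC hc, card_erase_of_mem hc]) hi

end Valuations

section Cycle

open Fin.NatCast

variable {n : ℕ}

theorem cycDist_eq_min_val_sub (a b : Fin n) : cycDist n a b = min (a - b).val (b - a).val := by
  rw [cycDist, Fin.val_sub, Fin.val_sub, Nat.add_comm (n - b.val), Nat.add_comm (n - a.val),
    ← Nat.add_sub_assoc b.is_lt.le, ← Nat.add_sub_assoc a.is_lt.le]

variable [NeZero n]

theorem cycDist_add_one_le (a : Fin n) : cycDist n a (a + 1) ≤ 1 := by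
  rw [cycDist_eq_min_val_sub, add_sub_cancel_left]
  exact (min_le_right _ _).trans (Fin.val_one' n ▸ Nat.mod_le 1 n)

theorem cycDist_sub_one_le (a : Fin n) : cycDist n a (a - 1) ≤ 1 := by
  rw [cycDist_eq_min_val_sub, sub_sub_cancel]
  exact (min_le_left _ _).trans (Fin.val_one' n ▸ Nat.mod_le 1 n)

/-- `(b - a).val ≤ (D - a).val` says that `b` lies on the arc from `a` forward to `D`. -/
theorem Fin.walk_add_one {p : Fin n → Prop} {a D : Fin n} (ha : p a)
    (hstep : ∀ b, p b → b ≠ D → p (b + 1)) {b : Fin n} (hb : (b - a).val ≤ (D - a).val) :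
    p b := by
  suffices h : ∀ t : ℕ, t ≤ (D - a).val → p (a + t) by
    simpa using h _ hb
  intro t ht
  induction t with
  | zero => simpa using ha
  | succ t ih =>
    have htD : a + t ≠ D := fun h => by
      have : ((t : Fin n)).val = (D - a).val := by rw [← h, add_sub_cancel_left]
      rw [Fin.val_natCast, Nat.mod_eq_of_lt (by omega)] at this
      omega
    simpa [add_assoc] using hstep _ (ih (by omega)) htD

theorem Fin.forall_of_add_one_of_sub_one {p : Fin n → Prop} {a D : Fin n} (ha : p a)
    (haD : a ≠ D) (hsucc : ∀ b, p b → b ≠ D → p (b + 1))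
    (hpred : ∀ b, p b → b ≠ D → p (b - 1)) (b : Fin n) : p b := by
  by_cases hb : (b - a).val ≤ (D - a).val
  · exact walk_add_one ha hsucc hb
  have hneg := walk_add_one (p := fun c => p (-c)) (a := -a) (D := -D) (b := -b) (by simpa)
    fun c hc hcD => by
      simpa [neg_add', sub_eq_add_neg, add_comm] using
        hpred _ hc fun h => hcD (by rw [← h, neg_neg])
  simp only [neg_neg] at hneg
  apply hneg
  have hDa : D - a ≠ 0 := sub_ne_zero.mpr haD.symm
  have hba : b - a ≠ 0 := fun h => by simp [h] at hb
  rw [neg_sub_neg, neg_sub_neg, ← neg_sub b, ← neg_sub D, Fin.val_neg, Fin.val_neg,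
    if_neg hba, if_neg hDa]
  omega

theorem Fin.card_filter_cycDist_le {d : ℕ} (hd : 2 * d < n) (a : Fin n) :
    #{b | a ≠ b ∧ cycDist n a b ≤ d} = 2 * d := by
  have hmem : ∀ b, a ≠ b ∧ cycDist n a b ≤ d ↔
      (b - a).val ∈ Icc 1 d ∪ Icc (n - d) (n - 1) := by
    intro b
    have := (b - a).is_lt
    rw [cycDist_eq_min_val_sub, ← neg_sub b a, Fin.val_neg, ne_comm, ← sub_ne_zero,
      ← Fin.val_ne_zero_iff, mem_union, mem_Icc, mem_Icc]
    split_ifs with h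
    · have := Fin.val_eq_zero_iff.mpr h
      omega
    · omega
  have hval : ∀ t ∈ Icc 1 d ∪ Icc (n - d) (n - 1), ((a + t) - a).val = t := fun t ht => by
    rw [mem_union, mem_Icc, mem_Icc] at ht
    rw [add_sub_cancel_left, Fin.val_natCast, Nat.mod_eq_of_lt (by omega)]
  rw [card_nbij' (fun b => (b - a).val) (fun t => a + t) (t := Icc 1 d ∪ Icc (n - d) (n - 1))
    (fun b hb => (hmem b).mp (mem_filter.mp hb).2)
    (fun t ht => mem_filter.mpr ⟨mem_univ _, (hmem _).mpr ((hval t ht).symm ▸ ht)⟩)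
    (fun b _ => by simp) hval, card_union_of_disjoint, Nat.card_Icc, Nat.card_Icc]
  · omega
  · exact disjoint_left.mpr fun t h1 h2 => by simp only [mem_Icc] at h1 h2; omega

end Cycle

namespace IsCirculantGadget

variable {N : Type*} [DecidableEq N] {G : SimpleGraph N} {r k' : ℕ} {P : Finset N}

theorem card_eq (h : IsCirculantGadget G r k' P) : #P = k' := by
  obtain ⟨f, hinj, rfl, -⟩ := h
  rw [card_image_of_injective _ hinj, card_univ, Fintype.card_fin]

theorem card_friendsIn (h : IsCirculantGadget G r k' P) (hr : Even r) (hrk : r < k') {x : N}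
    (hx : x ∈ P) : #(friendsIn G P x) = r := by
  obtain ⟨f, hinj, rfl, hadj⟩ := h
  obtain ⟨a, -, rfl⟩ := mem_image.mp hx
  have : NeZero k' := ⟨by omega⟩
  have hfr : friendsIn G (univ.image f) (f a) =
      ({b | a ≠ b ∧ cycDist k' a b ≤ r / 2} : Finset _).image f := by
    ext y
    simp only [friendsIn, mem_filter, mem_image, mem_univ, true_and]
    constructor
    · rintro ⟨⟨b, rfl⟩, hab⟩; exact ⟨b, (hadj a b).mp hab, rfl⟩
    · rintro ⟨b, hb, rfl⟩; exact ⟨⟨b, rfl⟩, (hadj a b).mpr hb⟩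
  rw [hfr, card_image_of_injective _ hinj, Fin.card_filter_cycDist_le (by omega),
    Nat.two_mul_div_two_of_even hr]

theorem utilMinEQ_eq [Fintype N] (h : IsCirculantGadget G r k' P) (hr : Even r) (hrk : r < k')
    {x : N} (hx : x ∈ P) : utilMinEQ G P x = fvalOfCounts (Fintype.card N) r k' :=
  h.card_eq ▸ utilMinEQ_eq_of_regular (fun _ hc => h.card_friendsIn hr hrk hc) hx

/-- As `r ≥ 2`, consecutive players along the cycle are friends, so membership in `S` spreads
around the cycle in both directions until it meets `D`. -/
theorem subset_of_forall_friendsIn_subset (h : IsCirculantGadget G r k' P) (hr : 2 ≤ r)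
    {S : Finset N} {x D : N} (hxP : x ∈ P) (hxS : x ∈ S) (hxD : x ≠ D) (hD : D ∈ P)
    (hS : ∀ z ∈ P, z ∈ S → z ≠ D → friendsIn G P z ⊆ S) : P ⊆ S := by
  obtain ⟨f, hinj, rfl, hadj⟩ := h
  obtain ⟨a, -, rfl⟩ := mem_image.mp hxP
  obtain ⟨c, -, rfl⟩ := mem_image.mp hD
  have : NeZero k' := ⟨Fin.pos a |>.ne'⟩
  have hstep : ∀ b b', cycDist k' b b' ≤ 1 → f b ∈ S → b ≠ c → f b' ∈ S := by
    intro b b' hbb' hb hbc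
    by_cases hb' : b = b'
    · exact hb' ▸ hb
    refine hS _ (mem_image_of_mem f (mem_univ b)) hb (hinj.ne hbc) (mem_filter.mpr ?_)
    exact ⟨mem_image_of_mem f (mem_univ b'), (hadj b b').mpr ⟨hb', by omega⟩⟩
  have hall := Fin.forall_of_add_one_of_sub_one (p := fun b => f b ∈ S) hxS
    (fun h => hxD (congrArg f h))
    (fun b hb hbc => hstep b _ (cycDist_add_one_le b) hb hbc)
    fun b hb hbc => hstep b _ (cycDist_sub_one_le b) hb hbc
  intro y hy
  obtain ⟨b, -, rfl⟩ := mem_image.mp hy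
  exact hall b

end IsCirculantGadget

namespace Blocks

variable {N : Type*} [Fintype N] [DecidableEq N] {G : SimpleGraph N} {Γ : CoalitionStructure N}
  {C : Finset N} {x : N} {r k' : ℕ}

theorem utilMinEQ_part_lt_fval (hB : Blocks (utilMinEQ G) Γ C) (hx : x ∈ C) :
    utilMinEQ G (Γ.part x) x < fval G C x :=
  (hB.2 x hx).trans_le (utilMinEQ_le_fval C x)

theorem card_friendsIn_of_isCirculantGadget (hB : Blocks (utilMinEQ G) Γ C) (hx : x ∈ C)
    (hg : IsCirculantGadget G r k' (Γ.part x)) (hr : Even r) (hrk : r < k') :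
    r < #(friendsIn G C x) ∨ r = #(friendsIn G C x) ∧ #C < k' := by
  have h := hB.utilMinEQ_part_lt_fval hx
  have hk' := hg.card_eq ▸ card_le_univ (Γ.part x)
  have hC : 0 < #C := card_pos.mpr ⟨x, hx⟩
  rwa [hg.utilMinEQ_eq hr hrk (Γ.mem_part x), fval_eq_fvalOfCounts hx,
    fvalOfCounts_lt_fvalOfCounts_iff (by omega) hC (by omega) (by linarith [card_le_univ C])] at h

theorem le_card_friendsIn_of_isCirculantGadget (hB : Blocks (utilMinEQ G) Γ C) (hx : x ∈ C)
    (hg : IsCirculantGadget G r k' (Γ.part x)) (hr : Even r) (hrk : r < k') :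
    r ≤ #(friendsIn G C x) := by
  rcases hB.card_friendsIn_of_isCirculantGadget hx hg hr hrk with h | ⟨h, -⟩ <;> omega

theorem subset_of_friendsIn_subset_of_card_le (hB : Blocks (utilMinEQ G) Γ C) (hx : x ∈ C)
    (hg : IsCirculantGadget G r k' (Γ.part x)) (hr : Even r) (hrk : r < k') {S : Finset N}
    (hS : friendsIn G C x ⊆ S) (hSr : #S ≤ r) : S ⊆ C ∧ #C < k' := by
  rcases hB.card_friendsIn_of_isCirculantGadget hx hg hr hrk with h | ⟨h, hC⟩
  · exact absurd (card_le_card hS) (by omega)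
  · exact ⟨eq_of_subset_of_card_le hS (by omega) ▸ filter_subset _ _, hC⟩

theorem card_part_le_card_friendsIn_of_isClique (hB : Blocks (utilMinEQ G) Γ C) (hx : x ∈ C)
    (hA : G.IsClique (Γ.part x : Set N)) : #(Γ.part x) ≤ #(friendsIn G C x) := by
  have h := hB.utilMinEQ_part_lt_fval hx
  have hA0 : 0 < #(Γ.part x) := card_pos.mpr ⟨x, Γ.mem_part x⟩
  have hC := card_friendsIn_lt (G := G) hx
  rw [utilMinEQ_eq_of_isClique hA (Γ.mem_part x), fval_eq_fvalOfCounts hx,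
    fvalOfCounts_lt_fvalOfCounts_iff hA0 (by omega) (by linarith [card_le_univ (Γ.part x)])
      (by linarith [card_le_univ C])] at h
  omega

/-- A gadget player other than `D` in `C` would need all of its gadget friends in `C`, and so
would each of them: `C` would contain the whole gadget, too large for its players to gain. -/
theorem not_mem_of_isCirculantGadget (hB : Blocks (utilMinEQ G) Γ C) {P : Finset N} {D : N}
    (hg : IsCirculantGadget G r k' P) (hr : Even r) (hr2 : 2 ≤ r) (hrk : r < k')
    (hpart : ∀ z ∈ P, Γ.part z = P) (hD : D ∈ P)
    (hloc : ∀ z ∈ P, z ≠ D → ∀ y, G.Adj z y → y ∈ P) (hx : x ∈ P) (hxD : x ≠ D) :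
    x ∉ C := by
  intro hxC
  have hclosed : ∀ z ∈ P, z ∈ C → z ≠ D → friendsIn G P z ⊆ C ∧ #C < k' :=
    fun z hz hzC hzD => hB.subset_of_friendsIn_subset_of_card_le hzC (hpart z hz ▸ hg) hr hrk
      (fun y hy => mem_filter.mpr ⟨hloc z hz hzD y (mem_filter.mp hy).2, (mem_filter.mp hy).2⟩)
      (hg.card_friendsIn hr hrk hz).le
  have hPC := hg.subset_of_forall_friendsIn_subset hr2 hx hxC hxD hD
    fun z hz hzC hzD => (hclosed z hz hzC hzD).1
  have := hg.card_eq ▸ card_le_card hPC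
  exact absurd (hclosed x hx hxC hxD).2 (by omega)

end Blocks

theorem sub_one_lt_minK' (k : ℕ) : k - 1 < minK' k := by unfold minK'; omega

theorem SimpleGraph.IsClique.mem_edgeSet_of_mem_image_offDiag {V : Type*} [DecidableEq V]
    {H : SimpleGraph V} {K : Finset V} (hK : H.IsClique (K : Set V)) {e : Sym2 V}
    (he : e ∈ K.offDiag.image Sym2.mk.uncurry) : e ∈ H.edgeSet := by
  obtain ⟨⟨a, b⟩, hab, rfl⟩ := mem_image.mp he
  obtain ⟨ha, hb, hab⟩ := mem_offDiag.mp hab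
  exact hK ha hb hab

theorem SimpleGraph.isNClique_of_le_card_filter_adj {V : Type*} [DecidableEq V]
    {H : SimpleGraph V} [DecidableRel H.Adj] {K : Finset V} {k : ℕ} (hK : K.Nonempty)
    (hcard : #K ≤ k) (hdeg : ∀ v ∈ K, k - 1 ≤ #(K.filter (H.Adj v))) : H.IsNClique k K := by
  have hsub : ∀ v ∈ K, K.filter (H.Adj v) ⊆ K.erase v := fun v _ w hw =>
    mem_erase.mpr ⟨(mem_filter.mp hw).2.ne', (mem_filter.mp hw).1⟩
  obtain ⟨v₀, hv₀⟩ := hK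
  have hk : #K = k := by
    have := (hdeg v₀ hv₀).trans (card_le_card (hsub v₀ hv₀))
    rw [card_erase_of_mem hv₀] at this
    have := card_pos.mpr ⟨v₀, hv₀⟩
    omega
  refine ⟨fun v hv w hw hvw => ?_, hk⟩
  have heq := eq_of_subset_of_card_le (hsub v hv)
    (by rw [card_erase_of_mem hv, hk]; exact hdeg v hv)
  exact (mem_filter.mp (heq ▸ mem_erase.mpr ⟨hvw.symm, hw⟩ : w ∈ K.filter (H.Adj v))).2

/-- The counting behind the choice of `minK' k`: `m` vertices of degree at least `k - 1` span
at least `m (k - 1) / 2` edges, and these cost `k` players each. -/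
theorem le_of_handshake_of_lt_minK' {m q k : ℕ} (hdeg : m * (k - 1) ≤ q * 2)
    (hsize : m + k * q < minK' k) : m ≤ k := by
  obtain ⟨t, ht⟩ : ∃ t, k * (k - 1) = t := ⟨_, rfl⟩
  have hchoose : 2 * k.choose 2 = t := by
    rw [Nat.choose_two_right, ← ht, Nat.mul_div_cancel' (Nat.even_mul_pred_self k).two_dvd]
  have h1 : m * t ≤ 2 * (k * q) := by
    calc m * t = k * (m * (k - 1)) := by rw [← ht]; ring
      _ ≤ k * (q * 2) := Nat.mul_le_mul_left k hdeg
      _ = 2 * (k * q) := by ring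
  have h2 : 2 * (m + k * q) ≤ k * t + 2 * k := by
    have : m + k * q + 1 ≤ k * k.choose 2 + k + 1 := hsize
    calc 2 * (m + k * q) ≤ 2 * (k * k.choose 2 + k) := by omega
      _ = k * t + 2 * k := by rw [← hchoose]; ring
  refine Nat.le_of_mul_le_mul_right (c := t + 2) ?_ (by omega)
  nlinarith

/-- The coalitions of `Γ` in the min-based reduction, labelled by the part of `H` they encode. -/
inductive Block (V : Type*)
  | vertex (v : V)
  | edge (e : Sym2 V)
  | incidence (v : V) (e : Sym2 V)
  | dummies (e : Sym2 V)

namespace Block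

variable {V N : Type*}

def IsValid (H : SimpleGraph V) : Block V → Prop
  | vertex _ => True
  | edge e => e ∈ H.edgeSet
  | incidence v e => e ∈ H.edgeSet ∧ v ∈ e
  | dummies e => e ∈ H.edgeSet

def players (Pv : V → Finset N) (Pe : Sym2 V → Finset N) (Pve : V → Sym2 V → Finset N)
    (Ae : Sym2 V → Finset N) : Block V → Finset N
  | vertex v => Pv v
  | edge e => Pe e
  | incidence v e => Pve v e
  | dummies e => Ae e

/-- `ExternalAdj b x y`: the friendship between a player `x` of block `b` and a player `y`
outside it is one of the edges added between the gadgets. -/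
def ExternalAdj (H : SimpleGraph V) (Ae : Sym2 V → Finset N) (vp : V → N) (ep : Sym2 V → N)
    (bp : V → Sym2 V → N) : Block V → N → N → Prop
  | vertex v, x, y => x = vp v ∧ ∃ e ∈ H.edgeSet, v ∈ e ∧ y = bp v e
  | edge e, x, y => x = ep e ∧ ((∃ w ∈ e, y = bp w e) ∨ y ∈ Ae e)
  | incidence v e, x, y => x = bp v e ∧ (y = vp v ∨ y = ep e ∨ y ∈ Ae e)
  | dummies e, _, y => y = ep e ∨ ∃ w ∈ e, y = bp w e

end Block

section CliqueCoalition

variable {V N : Type*} [DecidableEq V] [DecidableEq N]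

def edgeGroup (Ae : Sym2 V → Finset N) (ep : Sym2 V → N) (bp : V → Sym2 V → N)
    (e : Sym2 V) : Finset N :=
  insert (ep e) (e.toFinset.image (bp · e) ∪ Ae e)

def cliqueCoalition (Ae : Sym2 V → Finset N) (vp : V → N) (ep : Sym2 V → N)
    (bp : V → Sym2 V → N) (K : Finset V) (E : Finset (Sym2 V)) : Finset N :=
  K.image vp ∪ E.biUnion (edgeGroup Ae ep bp)

variable {Ae : Sym2 V → Finset N} {vp : V → N} {ep : Sym2 V → N} {bp : V → Sym2 V → N}

theorem mem_edgeGroup {e : Sym2 V} {z : N} :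
    z ∈ edgeGroup Ae ep bp e ↔ z = ep e ∨ (∃ w ∈ e, bp w e = z) ∨ z ∈ Ae e := by
  simp [edgeGroup, Sym2.mem_toFinset]

theorem mem_cliqueCoalition {K : Finset V} {E : Finset (Sym2 V)} {z : N} :
    z ∈ cliqueCoalition Ae vp ep bp K E ↔
      (∃ v ∈ K, vp v = z) ∨ ∃ e ∈ E, z ∈ edgeGroup Ae ep bp e := by
  simp [cliqueCoalition]

theorem vp_mem_cliqueCoalition {K : Finset V} {E : Finset (Sym2 V)} {v : V} (hv : v ∈ K) :
    vp v ∈ cliqueCoalition Ae vp ep bp K E :=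
  mem_union_left _ (mem_image_of_mem vp hv)

theorem edgeGroup_subset_cliqueCoalition {K : Finset V} {E : Finset (Sym2 V)} {e : Sym2 V}
    (he : e ∈ E) : edgeGroup Ae ep bp e ⊆ cliqueCoalition Ae vp ep bp K E :=
  (subset_biUnion_of_mem _ he).trans subset_union_right

end CliqueCoalition

namespace MinReduction

variable {V N : Type*} [DecidableEq V] [DecidableEq N]
  {H : SimpleGraph V} {k : ℕ} {G : SimpleGraph N}
  {Pv : V → Finset N} {Pe : Sym2 V → Finset N} {Pve : V → Sym2 V → Finset N}
  {Ae : Sym2 V → Finset N} {vp : V → N} {ep : Sym2 V → N} {bp : V → Sym2 V → N}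
  (R : MinReduction H k G Pv Pe Pve Ae vp ep bp)
include R

theorem eq_of_mem_players {b c : Block V} {x : N} (hb : b.IsValid H) (hc : c.IsValid H)
    (hxb : x ∈ b.players Pv Pe Pve Ae) (hxc : x ∈ c.players Pv Pe Pve Ae) : b = c := by
  have key : ∀ {s t : Finset N}, Disjoint s t → x ∈ s → x ∈ t → False :=
    fun h hs ht => disjoint_left.mp h hs ht
  cases b <;> cases c <;>
    simp only [Block.IsValid, Block.players, Block.vertex.injEq, Block.edge.injEq,
      Block.incidence.injEq, Block.dummies.injEq, reduceCtorEq] at hb hc hxb hxc ⊢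
  · by_contra h; exact key (R.disj_vv _ _ h) hxb hxc
  · exact key (R.disj_v_e _ _ hc) hxb hxc
  · exact key (R.disj_v_b _ _ _ hc.1 hc.2) hxb hxc
  · exact key (R.disj_v_a _ _ hc) hxb hxc
  · exact key (R.disj_v_e _ _ hb) hxc hxb
  · by_contra h; exact key (R.disj_ee _ hb _ hc h) hxb hxc
  · exact key (R.disj_e_b _ hb _ _ hc.1 hc.2) hxb hxc
  · exact key (R.disj_e_a _ hb _ hc) hxb hxc
  · exact key (R.disj_v_b _ _ _ hb.1 hb.2) hxc hxb
  · exact key (R.disj_e_b _ hc _ _ hb.1 hb.2) hxc hxb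
  · by_contra h
    exact key (R.disj_bb _ _ hb.1 hb.2 _ _ hc.1 hc.2 fun h' => h (Prod.mk.inj h')) hxb hxc
  · exact key (R.disj_b_a _ _ hb.1 hb.2 _ hc) hxb hxc
  · exact key (R.disj_v_a _ _ hb) hxc hxb
  · exact key (R.disj_e_a _ hc _ hb) hxc hxb
  · exact key (R.disj_b_a _ _ hc.1 hc.2 _ hb) hxc hxb
  · by_contra h; exact key (R.disj_aa _ hb _ hc h) hxb hxc

theorem adj_cases_block {b : Block V} {x y : N} (hb : b.IsValid H)
    (hx : x ∈ b.players Pv Pe Pve Ae) (hxy : G.Adj x y) :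
    y ∈ b.players Pv Pe Pve Ae ∨ b.ExternalAdj H Ae vp ep bp x y := by
  rcases R.adj_cases x y hxy with
    ⟨w, hx', hy⟩ | ⟨f, hf, hx', hy⟩ | ⟨w, f, hf, hwf, hx', hy⟩ | ⟨f, hf, hx', hy⟩ |
    ⟨w, f, hf, hwf, ⟨rfl, rfl⟩ | ⟨rfl, rfl⟩⟩ |
    ⟨w, f, hf, hwf, ⟨rfl, rfl⟩ | ⟨rfl, rfl⟩⟩ |
    ⟨f, hf, ⟨hx', rfl⟩ | ⟨hy, rfl⟩⟩ |
    ⟨w, f, hf, hwf, ⟨hx', rfl⟩ | ⟨hy, rfl⟩⟩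
  · obtain rfl := R.eq_of_mem_players (c := .vertex w) hb trivial hx hx'; exact .inl hy
  · obtain rfl := R.eq_of_mem_players (c := .edge f) hb hf hx hx'; exact .inl hy
  · obtain rfl := R.eq_of_mem_players (c := .incidence w f) hb ⟨hf, hwf⟩ hx hx'; exact .inl hy
  · obtain rfl := R.eq_of_mem_players (c := .dummies f) hb hf hx hx'; exact .inl hy
  · obtain rfl :=
      R.eq_of_mem_players (c := .incidence w f) hb ⟨hf, hwf⟩ hx (R.bp_mem w f hf hwf)
    exact .inr ⟨rfl, .inl rfl⟩
  · obtain rfl := R.eq_of_mem_players (c := .vertex w) hb trivial hx (R.vp_mem w)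
    exact .inr ⟨rfl, f, hf, hwf, rfl⟩
  · obtain rfl :=
      R.eq_of_mem_players (c := .incidence w f) hb ⟨hf, hwf⟩ hx (R.bp_mem w f hf hwf)
    exact .inr ⟨rfl, .inr (.inl rfl)⟩
  · obtain rfl := R.eq_of_mem_players (c := .edge f) hb hf hx (R.ep_mem f hf)
    exact .inr ⟨rfl, .inl ⟨w, hwf, rfl⟩⟩
  · obtain rfl := R.eq_of_mem_players (c := .dummies f) hb hf hx hx'
    exact .inr (.inl rfl)
  · obtain rfl := R.eq_of_mem_players (c := .edge f) hb hf hx (R.ep_mem f hf)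
    exact .inr ⟨rfl, .inr hy⟩
  · obtain rfl := R.eq_of_mem_players (c := .dummies f) hb hf hx hx'
    exact .inr (.inr ⟨w, hwf, rfl⟩)
  · obtain rfl :=
      R.eq_of_mem_players (c := .incidence w f) hb ⟨hf, hwf⟩ hx (R.bp_mem w f hf hwf)
    exact .inr ⟨rfl, .inr (.inr hy)⟩

theorem vp_injective : Function.Injective vp := fun v w h => by
  simpa using R.eq_of_mem_players (b := .vertex v) (c := .vertex w) trivial trivial
    (R.vp_mem v) (h ▸ R.vp_mem w)

theorem ep_inj {e f : Sym2 V} (he : e ∈ H.edgeSet) (hf : f ∈ H.edgeSet) (h : ep e = ep f) :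
    e = f := by
  simpa using R.eq_of_mem_players (b := .edge e) (c := .edge f) he hf
    (R.ep_mem e he) (h ▸ R.ep_mem f hf)

theorem bp_inj {v w : V} {e f : Sym2 V} (he : e ∈ H.edgeSet) (hve : v ∈ e)
    (hf : f ∈ H.edgeSet) (hwf : w ∈ f) (h : bp v e = bp w f) : v = w ∧ e = f := by
  simpa using R.eq_of_mem_players (b := .incidence v e) (c := .incidence w f) ⟨he, hve⟩
    ⟨hf, hwf⟩ (R.bp_mem v e he hve) (h ▸ R.bp_mem w f hf hwf)

theorem vp_ne_ep {v : V} {e : Sym2 V} (he : e ∈ H.edgeSet) : vp v ≠ ep e := fun h => by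
  simpa using R.eq_of_mem_players (b := .vertex v) (c := .edge e) trivial he
    (R.vp_mem v) (h ▸ R.ep_mem e he)

theorem vp_ne_bp {v w : V} {f : Sym2 V} (hf : f ∈ H.edgeSet) (hwf : w ∈ f) :
    vp v ≠ bp w f := fun h => by
  simpa using R.eq_of_mem_players (b := .vertex v) (c := .incidence w f) trivial ⟨hf, hwf⟩
    (R.vp_mem v) (h ▸ R.bp_mem w f hf hwf)

theorem ep_ne_bp {w : V} {e f : Sym2 V} (he : e ∈ H.edgeSet) (hf : f ∈ H.edgeSet)
    (hwf : w ∈ f) : ep e ≠ bp w f := fun h => by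
  simpa using R.eq_of_mem_players (b := .edge e) (c := .incidence w f) he ⟨hf, hwf⟩
    (R.ep_mem e he) (h ▸ R.bp_mem w f hf hwf)

theorem vp_not_mem_Ae {v : V} {e : Sym2 V} (he : e ∈ H.edgeSet) : vp v ∉ Ae e := fun h => by
  simpa using R.eq_of_mem_players (b := .vertex v) (c := .dummies e) trivial he (R.vp_mem v) h

theorem ep_not_mem_Ae {e f : Sym2 V} (he : e ∈ H.edgeSet) (hf : f ∈ H.edgeSet) :
    ep e ∉ Ae f := fun h => by
  simpa using R.eq_of_mem_players (b := .edge e) (c := .dummies f) he hf (R.ep_mem e he) h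

theorem bp_not_mem_Ae {v : V} {e f : Sym2 V} (he : e ∈ H.edgeSet) (hve : v ∈ e)
    (hf : f ∈ H.edgeSet) : bp v e ∉ Ae f := fun h => by
  simpa using R.eq_of_mem_players (b := .incidence v e) (c := .dummies f) ⟨he, hve⟩ hf
    (R.bp_mem v e he hve) h

theorem eq_of_mem_Ae {a : N} {e f : Sym2 V} (he : e ∈ H.edgeSet) (hf : f ∈ H.edgeSet)
    (hae : a ∈ Ae e) (haf : a ∈ Ae f) : e = f := by
  simpa using R.eq_of_mem_players (b := .dummies e) (c := .dummies f) he hf hae haf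

theorem card_edgeGroup (hk : 3 ≤ k) {e : Sym2 V} (he : e ∈ H.edgeSet) :
    #(edgeGroup Ae ep bp e) = k := by
  have hbp : #(e.toFinset.image (bp · e)) = 2 := by
    rw [card_image_of_injOn fun v hv w hw h => (R.bp_inj he (Sym2.mem_toFinset.mp hv) he
      (Sym2.mem_toFinset.mp hw) h).1, Sym2.card_toFinset_of_not_isDiag _
      (H.not_isDiag_of_mem_edgeSet he)]
  have hdisj : Disjoint (e.toFinset.image (bp · e)) (Ae e) := disjoint_left.mpr fun z hz => by
    obtain ⟨w, hw, rfl⟩ := mem_image.mp hz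
    exact R.bp_not_mem_Ae he (Sym2.mem_toFinset.mp hw) he
  have hep : ep e ∉ e.toFinset.image (bp · e) ∪ Ae e := by
    rw [mem_union, not_or]
    refine ⟨fun h => ?_, R.ep_not_mem_Ae he he⟩
    obtain ⟨w, hw, h⟩ := mem_image.mp h
    exact R.ep_ne_bp he he (Sym2.mem_toFinset.mp hw) h.symm
  rw [edgeGroup, card_insert_of_notMem hep, card_union_of_disjoint hdisj, hbp, R.Ae_card e he]
  omega

theorem disjoint_edgeGroup {e f : Sym2 V} (he : e ∈ H.edgeSet) (hf : f ∈ H.edgeSet)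
    (hef : e ≠ f) : Disjoint (edgeGroup Ae ep bp e) (edgeGroup Ae ep bp f) := by
  refine disjoint_left.mpr fun z hze hzf => hef ?_
  rw [mem_edgeGroup] at hze hzf
  rcases hze with rfl | ⟨w, hw, rfl⟩ | hz <;> rcases hzf with h | ⟨w', hw', h⟩ | h
  · exact R.ep_inj he hf h
  · exact absurd h.symm (R.ep_ne_bp he hf hw')
  · exact absurd h (R.ep_not_mem_Ae he hf)
  · exact absurd h.symm (R.ep_ne_bp hf he hw)
  · exact (R.bp_inj hf hw' he hw h).2.symm
  · exact absurd h (R.bp_not_mem_Ae he hw hf)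
  · exact absurd (h ▸ hz) (R.ep_not_mem_Ae hf he)
  · exact absurd (h ▸ hz) (R.bp_not_mem_Ae hf hw' he)
  · exact R.eq_of_mem_Ae he hf hz h

theorem vp_not_mem_edgeGroup {v : V} {e : Sym2 V} (he : e ∈ H.edgeSet) :
    vp v ∉ edgeGroup Ae ep bp e := by
  rw [mem_edgeGroup]
  rintro (h | ⟨w, hw, h⟩ | h)
  · exact R.vp_ne_ep he h
  · exact R.vp_ne_bp he hw h.symm
  · exact R.vp_not_mem_Ae he h

theorem card_cliqueCoalition (hk : 3 ≤ k) (K : Finset V) {E : Finset (Sym2 V)}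
    (hE : ∀ e ∈ E, e ∈ H.edgeSet) : #(cliqueCoalition Ae vp ep bp K E) = #K + k * #E := by
  have hdisj : Disjoint (K.image vp) (E.biUnion (edgeGroup Ae ep bp)) :=
    disjoint_left.mpr fun z hz hz' => by
      obtain ⟨v, -, rfl⟩ := mem_image.mp hz
      obtain ⟨e, he, hze⟩ := mem_biUnion.mp hz'
      exact R.vp_not_mem_edgeGroup (hE e he) hze
  rw [cliqueCoalition, card_union_of_disjoint hdisj, card_image_of_injective _ R.vp_injective,
    card_biUnion fun e he f hf hef => R.disjoint_edgeGroup (hE e he) (hE f hf) hef,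
    sum_congr rfl fun e he => R.card_edgeGroup hk (hE e he), sum_const, smul_eq_mul, mul_comm]

theorem adj_of_mem_edgeGroup {e : Sym2 V} (he : e ∈ H.edgeSet) {y z : N}
    (hz : z = ep e ∨ z ∈ Ae e) (hy : y ∈ edgeGroup Ae ep bp e) (hyz : y ≠ z) :
    G.Adj z y := by
  rcases mem_edgeGroup.mp hy with rfl | ⟨w, hw, rfl⟩ | hy <;> rcases hz with rfl | hz
  · exact absurd rfl hyz
  · exact R.adj_ae e he z hz
  · exact (R.adj_be w _ he hw).symm
  · exact R.adj_ab w e he hw z hz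
  · exact (R.adj_ae e he y hy).symm
  · exact R.Ae_clique e he z hz y hy hyz.symm

theorem le_card_friendsIn_vp {K : Finset V} {E : Finset (Sym2 V)}
    (hKE : ∀ v ∈ K, ∀ w ∈ K, v ≠ w → s(v, w) ∈ E ∧ s(v, w) ∈ H.edgeSet) {v : V} (hv : v ∈ K) :
    #K - 1 ≤ #(friendsIn G (cliqueCoalition Ae vp ep bp K E) (vp v)) := by
  have hinj : Set.InjOn (fun w => bp v s(v, w)) (K.erase v) := fun w hw w' hw' h => by
    obtain ⟨hwv, hw⟩ := mem_erase.mp hw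
    obtain ⟨hwv', hw'⟩ := mem_erase.mp hw'
    exact Sym2.congr_right.mp (R.bp_inj (hKE v hv w hw hwv.symm).2 (Sym2.mem_mk_left v w)
      (hKE v hv w' hw' hwv'.symm).2 (Sym2.mem_mk_left v w') h).2
  rw [← card_erase_of_mem hv, ← card_image_of_injOn hinj]
  refine card_le_card_friendsIn (fun y hy => ?_) fun y hy => ?_ <;>
    obtain ⟨w, hw, rfl⟩ := mem_image.mp hy <;>
    obtain ⟨hwv, hw⟩ := mem_erase.mp hw
  · exact edgeGroup_subset_cliqueCoalition (hKE v hv w hw hwv.symm).1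
      (mem_edgeGroup.mpr (.inr (.inl ⟨v, Sym2.mem_mk_left v w, rfl⟩)))
  · exact (R.adj_bv v _ (hKE v hv w hw hwv.symm).2 (Sym2.mem_mk_left v w)).symm

theorem le_card_friendsIn_of_mem_edgeGroup (hk : 3 ≤ k) {K : Finset V} {E : Finset (Sym2 V)}
    (hEK : ∀ e ∈ E, ∀ w ∈ e, w ∈ K) {e : Sym2 V} (he : e ∈ E) (heH : e ∈ H.edgeSet) {z : N}
    (hz : z ∈ edgeGroup Ae ep bp e) :
    k - 1 ≤ #(friendsIn G (cliqueCoalition Ae vp ep bp K E) z) := by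
  have hgroup : edgeGroup Ae ep bp e ⊆ cliqueCoalition Ae vp ep bp K E :=
    edgeGroup_subset_cliqueCoalition he
  rcases mem_edgeGroup.mp hz with rfl | ⟨w, hw, rfl⟩ | hza
  · rw [← R.card_edgeGroup hk heH, ← card_erase_of_mem hz]
    exact card_le_card_friendsIn ((erase_subset _ _).trans hgroup) fun y hy =>
      R.adj_of_mem_edgeGroup heH (.inl rfl) (mem_of_mem_erase hy) (ne_of_mem_erase hy)
  · have hS : #(insert (vp w) (insert (ep e) (Ae e))) = k - 1 := by
      rw [card_insert_of_notMem, card_insert_of_notMem (R.ep_not_mem_Ae heH heH),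
        R.Ae_card _ heH]
      · omega
      · rw [mem_insert, not_or]
        exact ⟨R.vp_ne_ep heH, R.vp_not_mem_Ae heH⟩
    refine hS ▸ card_le_card_friendsIn (insert_subset (vp_mem_cliqueCoalition (hEK e he w hw))
      (insert_subset (hgroup (mem_edgeGroup.mpr (.inl rfl)))
        fun y hy => hgroup (mem_edgeGroup.mpr (.inr (.inr hy))))) ?_
    simp only [mem_insert]
    rintro y (rfl | rfl | hy)
    exacts [R.adj_bv w _ heH hw, R.adj_be w _ heH hw, (R.adj_ab w _ heH hw y hy).symm]
  · rw [← R.card_edgeGroup hk heH, ← card_erase_of_mem hz]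
    exact card_le_card_friendsIn ((erase_subset _ _).trans hgroup) fun y hy =>
      R.adj_of_mem_edgeGroup heH (.inr hza) (mem_of_mem_erase hy) (ne_of_mem_erase hy)

theorem le_card_friendsIn_cliqueCoalition (hk : 3 ≤ k) {K : Finset V} (hK : H.IsNClique k K)
    {z : N} (hz : z ∈ cliqueCoalition Ae vp ep bp K (K.offDiag.image Sym2.mk.uncurry)) :
    k - 1 ≤
      #(friendsIn G (cliqueCoalition Ae vp ep bp K (K.offDiag.image Sym2.mk.uncurry)) z) := by
  rcases mem_cliqueCoalition.mp hz with ⟨v, hv, rfl⟩ | ⟨e, he, hze⟩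
  · refine hK.card_eq ▸ R.le_card_friendsIn_vp (fun v hv w hw hvw => ?_) hv
    exact ⟨mem_image.mpr ⟨(v, w), mem_offDiag.mpr ⟨hv, hw, hvw⟩, rfl⟩, hK.isClique hv hw hvw⟩
  refine R.le_card_friendsIn_of_mem_edgeGroup hk (fun e he w hw => ?_) he
    (hK.isClique.mem_edgeSet_of_mem_image_offDiag he) hze
  obtain ⟨⟨a, b⟩, hab, rfl⟩ := mem_image.mp he
  obtain ⟨ha, hb, -⟩ := mem_offDiag.mp hab
  rcases Sym2.mem_iff.mp hw with rfl | rfl <;> assumption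

theorem card_cliqueCoalition_offDiag (hk : 3 ≤ k) {K : Finset V} (hK : H.IsNClique k K) :
    #(cliqueCoalition Ae vp ep bp K (K.offDiag.image Sym2.mk.uncurry)) + 1 = minK' k := by
  rw [R.card_cliqueCoalition hk K fun e => hK.isClique.mem_edgeSet_of_mem_image_offDiag,
    Sym2.card_image_offDiag, hK.card_eq, minK']
  ring

theorem fvalOfCounts_lt_fval_cliqueCoalition [Fintype N] (hk : 3 ≤ k) {K : Finset V}
    (hK : H.IsNClique k K) {r m : ℕ} (hm : 0 < m) (hmn : m ≤ Fintype.card N)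
    (hrm : r < k - 1 ∨ r = k - 1 ∧ minK' k ≤ m) {c : N}
    (hc : c ∈ cliqueCoalition Ae vp ep bp K (K.offDiag.image Sym2.mk.uncurry)) :
    fvalOfCounts (Fintype.card N) r m <
      fval G (cliqueCoalition Ae vp ep bp K (K.offDiag.image Sym2.mk.uncurry)) c := by
  have hC := R.card_cliqueCoalition_offDiag hk hK
  have := R.le_card_friendsIn_cliqueCoalition (G := G) hk hK hc
  rw [fval_eq_fvalOfCounts hc, fvalOfCounts_lt_fvalOfCounts_iff hm (card_pos.mpr ⟨c, hc⟩)
    (by omega) (by linarith [card_le_univ (cliqueCoalition Ae vp ep bp K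
      (K.offDiag.image Sym2.mk.uncurry))])]
  omega

theorem blocks_cliqueCoalition [Fintype N] (hk : 3 ≤ k) (hodd : Odd k)
    {Γ : CoalitionStructure N} (hΓ : IsMinGamma H Pv Pe Pve Ae Γ) {K : Finset V}
    (hK : H.IsNClique k K) :
    Blocks (utilMinEQ G) Γ (cliqueCoalition Ae vp ep bp K (K.offDiag.image Sym2.mk.uncurry)) := by
  set C := cliqueCoalition Ae vp ep bp K (K.offDiag.image Sym2.mk.uncurry)
  obtain ⟨v₀, hv₀⟩ := card_pos.mp (hK.card_eq ▸ (by omega : 0 < k))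
  refine ⟨⟨vp v₀, vp_mem_cliqueCoalition hv₀⟩,
    fun i hi => lt_utilMinEQ_of_forall_lt_fval hi fun c hc => ?_⟩
  have hgadget : ∀ P, IsCirculantGadget G (k - 1) (minK' k) P → Γ.part i = P →
      utilMinEQ G (Γ.part i) i < fval G C c := by
    intro P hP hiP
    rw [hiP, hP.utilMinEQ_eq (Nat.Odd.sub_odd hodd odd_one) (sub_one_lt_minK' k)
      (hiP ▸ Γ.mem_part i)]
    exact R.fvalOfCounts_lt_fval_cliqueCoalition hk hK (by unfold minK'; omega)
      (hP.card_eq ▸ card_le_univ P) (.inr ⟨rfl, le_rfl⟩) hc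
  rcases mem_cliqueCoalition.mp hi with ⟨v, -, rfl⟩ | ⟨e, he, hie⟩
  · exact hgadget _ (R.circ_v v) (hΓ.1 v _ (R.vp_mem v))
  have heH := hK.isClique.mem_edgeSet_of_mem_image_offDiag he
  rcases mem_edgeGroup.mp hie with rfl | ⟨w, hw, rfl⟩ | hia
  · exact hgadget _ (R.circ_e e heH) (hΓ.2.1 e heH _ (R.ep_mem e heH))
  · exact hgadget _ (R.circ_ve w e heH hw) (hΓ.2.2.1 w e heH hw _ (R.bp_mem w e heH hw))
  · rw [hΓ.2.2.2 e heH i hia, utilMinEQ_eq_of_isClique (R.Ae_clique e heH) hia, R.Ae_card e heH]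
    exact R.fvalOfCounts_lt_fval_cliqueCoalition hk hK
      (R.Ae_card e heH ▸ card_pos.mpr ⟨i, hia⟩) (R.Ae_card e heH ▸ card_le_univ _)
      (.inl (by omega)) hc

section Blocking

variable [Fintype N] {Γ : CoalitionStructure N} {C : Finset N}
  (hΓ : IsMinGamma H Pv Pe Pve Ae Γ) (hB : Blocks (utilMinEQ G) Γ C)
include hΓ hB

theorem ep_mem_or_bp_mem_of_mem_Ae {a : N} {e : Sym2 V} (he : e ∈ H.edgeSet) (ha : a ∈ Ae e)
    (haC : a ∈ C) : ep e ∈ C ∨ ∃ w ∈ e, bp w e ∈ C := by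
  by_contra! h
  have hcl := hB.card_part_le_card_friendsIn_of_isClique haC
    (hΓ.2.2.2 e he a ha ▸ R.Ae_clique e he)
  have hsub : friendsIn G C a ⊆ (Ae e).erase a := fun y hy => by
    obtain ⟨hyC, hay⟩ := mem_filter.mp hy
    rcases R.adj_cases_block (b := .dummies e) he ha hay with hy | rfl | ⟨w, hw, rfl⟩
    · exact mem_erase.mpr ⟨hay.ne', hy⟩
    · exact absurd hyC h.1
    · exact absurd hyC (h.2 w hw)
  have := (card_le_card hsub).trans_lt (card_erase_lt_of_mem ha)
  rw [hΓ.2.2.2 e he a ha] at hcl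
  omega

variable (hk : 3 ≤ k) (hodd : Odd k)
include hk hodd

theorem not_mem_of_mem_Pv {x : N} {v : V} (hx : x ∈ Pv v) (hxv : x ≠ vp v) : x ∉ C :=
  hB.not_mem_of_isCirculantGadget (R.circ_v v) (Nat.Odd.sub_odd hodd odd_one) (by omega)
    (sub_one_lt_minK' k) (hΓ.1 v) (R.vp_mem v)
    (fun _ hz hzv _ hy => (R.adj_cases_block (b := .vertex v) trivial hz hy).resolve_right
      fun h => hzv h.1) hx hxv

theorem not_mem_of_mem_Pe {x : N} {e : Sym2 V} (he : e ∈ H.edgeSet) (hx : x ∈ Pe e)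
    (hxe : x ≠ ep e) : x ∉ C :=
  hB.not_mem_of_isCirculantGadget (R.circ_e e he) (Nat.Odd.sub_odd hodd odd_one) (by omega)
    (sub_one_lt_minK' k) (hΓ.2.1 e he) (R.ep_mem e he)
    (fun _ hz hze _ hy => (R.adj_cases_block (b := .edge e) he hz hy).resolve_right
      fun h => hze h.1) hx hxe

theorem not_mem_of_mem_Pve {x : N} {v : V} {e : Sym2 V} (he : e ∈ H.edgeSet) (hve : v ∈ e)
    (hx : x ∈ Pve v e) (hxb : x ≠ bp v e) : x ∉ C :=
  hB.not_mem_of_isCirculantGadget (R.circ_ve v e he hve) (Nat.Odd.sub_odd hodd odd_one)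
    (by omega) (sub_one_lt_minK' k) (hΓ.2.2.1 v e he hve) (R.bp_mem v e he hve)
    (fun _ hz hzb _ hy =>
      (R.adj_cases_block (b := .incidence v e) ⟨he, hve⟩ hz hy).resolve_right
      fun h => hzb h.1) hx hxb

theorem edgeGroup_subset {e : Sym2 V} (he : e ∈ H.edgeSet) (hep : ep e ∈ C) :
    edgeGroup Ae ep bp e ⊆ C := by
  refine insert_subset hep (hB.subset_of_friendsIn_subset_of_card_le hep
    (hΓ.2.1 e he _ (R.ep_mem e he) ▸ R.circ_e e he) (Nat.Odd.sub_odd hodd odd_one)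
    (sub_one_lt_minK' k) (fun y hy => ?_) ?_).1
  · obtain ⟨hyC, hy⟩ := mem_filter.mp hy
    rcases R.adj_cases_block (b := .edge e) he (R.ep_mem e he) hy with
      hyP | ⟨-, ⟨w, hw, rfl⟩ | hyA⟩
    · exact absurd hyC (R.not_mem_of_mem_Pe hΓ hB hk hodd he hyP hy.ne')
    · exact mem_union_left _ (mem_image.mpr ⟨w, Sym2.mem_toFinset.mpr hw, rfl⟩)
    · exact mem_union_right _ hyA
  · calc #(e.toFinset.image (bp · e) ∪ Ae e) ≤ #e.toFinset + #(Ae e) :=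
          (card_union_le _ _).trans (Nat.add_le_add_right card_image_le _)
      _ = k - 1 := by
          rw [Sym2.card_toFinset_of_not_isDiag _ (H.not_isDiag_of_mem_edgeSet he), R.Ae_card e he]
          omega

theorem vp_mem_ep_mem_of_bp_mem {v : V} {e : Sym2 V} (he : e ∈ H.edgeSet) (hve : v ∈ e)
    (hb : bp v e ∈ C) : vp v ∈ C ∧ ep e ∈ C ∧ #C < minK' k := by
  have hfr : friendsIn G C (bp v e) ⊆ insert (vp v) (insert (ep e) (Ae e)) := fun y hy => by
    obtain ⟨hyC, hy⟩ := mem_filter.mp hy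
    rcases R.adj_cases_block (b := .incidence v e) ⟨he, hve⟩ (R.bp_mem v e he hve) hy with
      hyP | ⟨-, rfl | rfl | hyA⟩
    · exact absurd hyC (R.not_mem_of_mem_Pve hΓ hB hk hodd he hve hyP hy.ne')
    · exact mem_insert_self _ _
    · exact mem_insert_of_mem (mem_insert_self _ _)
    · exact mem_insert_of_mem (mem_insert_of_mem hyA)
  have hcard : #(insert (vp v) (insert (ep e) (Ae e))) ≤ k - 1 := by
    have := (card_insert_le (vp v) _).trans (Nat.add_le_add_right (card_insert_le (ep e) (Ae e)) 1)
    rw [R.Ae_card e he] at this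
    omega
  obtain ⟨hS, hC⟩ := hB.subset_of_friendsIn_subset_of_card_le hb
    (hΓ.2.2.1 v e he hve _ (R.bp_mem v e he hve) ▸ R.circ_ve v e he hve)
    (Nat.Odd.sub_odd hodd odd_one) (sub_one_lt_minK' k) hfr hcard
  exact ⟨hS (mem_insert_self _ _), hS (mem_insert_of_mem (mem_insert_self _ _)), hC⟩

theorem ep_mem_vp_mem_of_bp_mem {v w : V} (hvw : H.Adj v w) (hb : bp v s(v, w) ∈ C) :
    ep s(v, w) ∈ C ∧ vp w ∈ C := by
  have hep := (R.vp_mem_ep_mem_of_bp_mem hΓ hB hk hodd hvw (Sym2.mem_mk_left v w) hb).2.1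
  have hbw := R.edgeGroup_subset hΓ hB hk hodd hvw hep
    (mem_edgeGroup.mpr (.inr (.inl ⟨w, Sym2.mem_mk_right v w, rfl⟩)))
  exact ⟨hep, (R.vp_mem_ep_mem_of_bp_mem hΓ hB hk hodd hvw (Sym2.mem_mk_right v w) hbw).1⟩

variable [Fintype V]

theorem le_card_bp_mem_of_vp_mem {v : V} (hv : vp v ∈ C) :
    k - 1 ≤ #{w | H.Adj v w ∧ bp v s(v, w) ∈ C} := by
  calc k - 1 ≤ #(friendsIn G C (vp v)) :=
        hB.le_card_friendsIn_of_isCirculantGadget hv (hΓ.1 v _ (R.vp_mem v) ▸ R.circ_v v)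
          (Nat.Odd.sub_odd hodd odd_one) (sub_one_lt_minK' k)
    _ ≤ #(({w | H.Adj v w ∧ bp v s(v, w) ∈ C} : Finset V).image fun w => bp v s(v, w)) :=
        card_le_card fun y hy => ?_
    _ ≤ _ := card_image_le
  obtain ⟨hyC, hy⟩ := mem_filter.mp hy
  rcases R.adj_cases_block (b := .vertex v) trivial (R.vp_mem v) hy with
    hyP | ⟨-, e, he, hve, rfl⟩
  · exact absurd hyC (R.not_mem_of_mem_Pv hΓ hB hk hodd hyP hy.ne')
  obtain ⟨w, rfl⟩ := Sym2.mem_iff_exists.mp hve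
  exact mem_image.mpr ⟨w, mem_filter.mpr ⟨mem_univ _, he, hyC⟩, rfl⟩

theorem exists_bp_mem : ∃ v e, e ∈ H.edgeSet ∧ v ∈ e ∧ bp v e ∈ C := by
  have of_ep : ∀ e ∈ H.edgeSet, ep e ∈ C →
      ∃ v e, e ∈ H.edgeSet ∧ v ∈ e ∧ bp v e ∈ C :=
    fun e he hep => ⟨e.out.1, e, he, e.out_fst_mem, R.edgeGroup_subset hΓ hB hk hodd he hep
      (mem_edgeGroup.mpr (.inr (.inl ⟨_, e.out_fst_mem, rfl⟩)))⟩
  obtain ⟨x, hx⟩ := hB.1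
  rcases R.cover x with
    ⟨v, hxv⟩ | ⟨e, he, hxe⟩ | ⟨v, e, he, hve, hxe⟩ | ⟨e, he, hxe⟩
  · obtain rfl : x = vp v := by_contra fun h => R.not_mem_of_mem_Pv hΓ hB hk hodd hxv h hx
    obtain ⟨w, hw⟩ := card_pos.mp ((by omega : 0 < k - 1).trans_le
      (R.le_card_bp_mem_of_vp_mem hΓ hB hk hodd hx))
    obtain ⟨hvw, hb⟩ := (mem_filter.mp hw).2
    exact ⟨v, s(v, w), hvw, Sym2.mem_mk_left v w, hb⟩
  · obtain rfl : x = ep e := by_contra fun h => R.not_mem_of_mem_Pe hΓ hB hk hodd he hxe h hx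
    exact of_ep e he hx
  · obtain rfl : x = bp v e :=
      by_contra fun h => R.not_mem_of_mem_Pve hΓ hB hk hodd he hve hxe h hx
    exact ⟨v, e, he, hve, hx⟩
  · rcases R.ep_mem_or_bp_mem_of_mem_Ae hΓ hB he hxe hx with hep | ⟨w, hw, hb⟩
    exacts [of_ep e he hep, ⟨w, e, he, hw, hb⟩]

theorem cliqueCoalition_subset :
    cliqueCoalition Ae vp ep bp {v | vp v ∈ C} {e | e ∈ H.edgeSet ∧ ep e ∈ C} ⊆ C := by
  intro z hz
  rcases mem_cliqueCoalition.mp hz with ⟨v, hv, rfl⟩ | ⟨e, he, hze⟩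
  · exact (mem_filter.mp hv).2
  · obtain ⟨heH, hep⟩ := (mem_filter.mp he).2
    exact R.edgeGroup_subset hΓ hB hk hodd heH hep hze

theorem exists_isNClique_of_blocks : ∃ K : Finset V, H.IsNClique k K := by
  set K : Finset V := {v | vp v ∈ C}
  set E : Finset (Sym2 V) := {e | e ∈ H.edgeSet ∧ ep e ∈ C}
  obtain ⟨v₀, e₀, he₀, hv₀, hb₀⟩ := R.exists_bp_mem hΓ hB hk hodd
  obtain ⟨hvp₀, -, hC⟩ := R.vp_mem_ep_mem_of_bp_mem hΓ hB hk hodd he₀ hv₀ hb₀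
  have hactive : ∀ v w, H.Adj v w → bp v s(v, w) ∈ C → s(v, w) ∈ E ∧ w ∈ K := fun v w hvw hb =>
    have h := R.ep_mem_vp_mem_of_bp_mem hΓ hB hk hodd hvw hb
    ⟨mem_filter.mpr ⟨mem_univ _, hvw, h.1⟩, mem_filter.mpr ⟨mem_univ _, h.2⟩⟩
  have hdeg : ∀ v ∈ K, k - 1 ≤ #{w | H.Adj v w ∧ bp v s(v, w) ∈ C} :=
    fun v hv => R.le_card_bp_mem_of_vp_mem hΓ hB hk hodd (mem_filter.mp hv).2
  have hsize : #K + k * #E < minK' k := by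
    rw [← R.card_cliqueCoalition hk K fun e he => (mem_filter.mp he).2.1]
    exact (card_le_card (R.cliqueCoalition_subset hΓ hB hk hodd)).trans_lt hC
  have hhand : #K * (k - 1) ≤ #E * 2 := by
    refine card_mul_le_card_mul (fun v e => v ∈ e) (fun v hv => ?_) (fun e he => ?_)
    · refine (hdeg v hv).trans (card_le_card_of_injOn (fun w => s(v, w)) (fun w hw => ?_)
        fun w _ w' _ h => Sym2.congr_right.mp h)
      obtain ⟨hvw, hb⟩ := (mem_filter.mp hw).2
      exact (mem_bipartiteAbove _).mpr ⟨(hactive v w hvw hb).1, Sym2.mem_mk_left v w⟩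
    · calc _ ≤ #e.toFinset := card_le_card fun v hv =>
            Sym2.mem_toFinset.mpr ((mem_bipartiteBelow _).mp hv).2
        _ = 2 := Sym2.card_toFinset_of_not_isDiag _
            (H.not_isDiag_of_mem_edgeSet (mem_filter.mp he).2.1)
  refine ⟨K, SimpleGraph.isNClique_of_le_card_filter_adj
    ⟨v₀, mem_filter.mpr ⟨mem_univ _, hvp₀⟩⟩
    (le_of_handshake_of_lt_minK' hhand hsize)
    fun v hv => (hdeg v hv).trans (card_le_card fun w hw => ?_)⟩
  obtain ⟨hvw, hb⟩ := (mem_filter.mp hw).2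
  exact mem_filter.mpr ⟨(hactive v w hvw hb).2, hvw⟩

end Blocking

end MinReduction

/-- In the min-based reduction instance built from a graph `H` and an odd `k ≥ 3`,
under min-EQ utilities, the coalition structure `Γ` is not core-stable iff `H`
contains a clique of size `k`. -/
theorem minEQ_not_coreStable_iff_clique {V N : Type*} [Fintype V] [DecidableEq V]
    [Fintype N] [DecidableEq N]
    (H : SimpleGraph V) (k : ℕ) (hk : 3 ≤ k) (hodd : Odd k)
    (G : SimpleGraph N) (Pv : V → Finset N) (Pe : Sym2 V → Finset N)
    (Pve : V → Sym2 V → Finset N) (Ae : Sym2 V → Finset N)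
    (vp : V → N) (ep : Sym2 V → N) (bp : V → Sym2 V → N)
    (R : MinReduction H k G Pv Pe Pve Ae vp ep bp)
    (Γ : CoalitionStructure N) (hΓ : IsMinGamma H Pv Pe Pve Ae Γ) :
    ¬ CoreStable (utilMinEQ G) Γ ↔ ∃ K : Finset V, H.IsNClique k K := by
  refine ⟨fun h => ?_, fun ⟨K, hK⟩ hstable =>
    hstable ⟨_, R.blocks_cliqueCoalition hk hodd hΓ hK⟩⟩
  obtain ⟨C, hB⟩ := not_not.mp h
  exact R.exists_isNClique_of_blocks hΓ hB hk hodd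
end
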